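/- arXiv:0806.3636 — 6 statements merged into one kernel-verified Lean document; each statement's English description precedes it below -/
import Mathlib

section
/- Let W = (a^{θ_n}_{c_n},…,a^{θ_1}_{c_1}) be an admissible sequence and 𝔭 = {𝔭₊, 𝔭₋, {q_i,r_i}_{i∈I}} a decomposition of [1,n] with 𝔭₊ ⊂ {i : θ_i = +1}, 𝔭₋ ⊂ {i : θ_i = −1}, and for each pair q_i ∈ {i : θ_i = −1}, r_i ∈ {i : θ_i = +1}, q_i > r_i. Then the oriented graph (σ, S, τ) with σ = {c_s : s ∈ 𝔭₊}, S = {(c_{q_i}, c_{r_i}) : i ∈ I}, τ = {c_t : t ∈ 𝔭₋} contains no circuits. -/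
/-!
Along a circuit `(q₀, r₀), (q₁, r₁), …` the annihilator `q₁` and the creator `r₀` carry the same
index, so admissibility forces `q₁ < r₀`; together with `r₁ < q₁` this makes the creator positions
`r₀ > r₁ > ⋯` strictly decreasing around the cycle, which is absurd.
-/

theorem ZMod.not_forall_apply_add_one_lt {α : Type*} [Preorder α] {m : ℕ}
    (f : ZMod (m + 1) → α) : ¬ ∀ i, f (i + 1) < f i := by
  intro hf
  have hdesc : ∀ k : ℕ, f ((k + 1 : ℕ) : ZMod (m + 1)) < f 0 := by
    intro k
    induction k with
    | zero => simpa using hf 0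
    | succ k ih =>
      rw [Nat.cast_succ]
      exact (hf _).trans ih
  simpa using hdesc m

/-- `θ i = true` marks a creator, `θ i = false` an annihilator. -/
def IsAdmissible {α ι : Type*} [LT α] (c : α → ι) (θ : α → Bool) : Prop :=
  ∀ i j, j < i → c i ≠ c j ∨ (θ i = true ∧ θ j = false)

theorem IsAdmissible.lt_of_index_eq {α ι : Type*} [LinearOrder α] {c : α → ι} {θ : α → Bool}
    (h : IsAdmissible c θ) {i j : α} (hc : c i = c j) (hi : θ i = false) (hj : θ j = true) :
    i < j := by
  have hθ : θ i ≠ θ j := by rw [hi, hj]; decide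
  refine lt_of_le_of_ne (le_of_not_gt fun hji => ?_) fun hij => hθ (congrArg θ hij)
  rcases h i j hji with hne | ⟨hi', -⟩
  · exact hne hc
  · exact hθ (hi'.trans hj.symm)

theorem decomposition_graph_no_circuits_general
    {ι : Type*} {n : ℕ} (c : Fin n → ι) (θ : Fin n → Bool)
    (hadm : ∀ i j : Fin n, j < i → c i ≠ c j ∨ (θ i = true ∧ θ j = false))
    (Pr : Finset (Fin n × Fin n))
    -- signs: `𝔭₊ ⊂ ω₊`, `𝔭₋ ⊂ ω₋`, and each pair `(q,r)` has `θ q = −1`,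
    -- `θ r = +1`, `q > r`
    (hpair : ∀ p ∈ Pr, θ p.1 = false ∧ θ p.2 = true ∧ p.2 < p.1) :
    ¬ ∃ (m : ℕ) (g : ZMod (m + 1) → Fin n × Fin n),
        (∀ i, g i ∈ Pr) ∧ ∀ i, c (g i).2 = c (g (i + 1)).1 := by
  rintro ⟨m, g, hg, hc⟩
  refine ZMod.not_forall_apply_add_one_lt (fun i => (g i).2) fun i => ?_
  obtain ⟨-, hr, -⟩ := hpair _ (hg i)
  obtain ⟨hq', -, hr'q'⟩ := hpair _ (hg (i + 1))
  exact hr'q'.trans (IsAdmissible.lt_of_index_eq hadm (hc i).symm hq' hr)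

/-- Lemma 1.7.1: for an admissible sequence `W` (indices `c i`, signs `θ i`,
with `i > j → c i ≠ c j ∨ (θ i = true ∧ θ j = false)`; `true` = creator) and a
decomposition `𝔭 = {𝔭₊, 𝔭₋, {(qᵢ,rᵢ)}}` of `[1,n]` with `𝔭₊` consisting of
creator positions, `𝔭₋` of annihilator positions, and each pair consisting of
an annihilator position `q` and a creator position `r` with `q > r`, the
associated graph `(σ, S, τ)` with `S = {(c_{qᵢ}, c_{rᵢ})}` contains no
circuits: there is no cyclic family of pairs in `S` in which the second index
of each pair coincides with the first index of the next. -/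
theorem decomposition_graph_no_circuits
    {ι : Type*} {n : ℕ} (c : Fin n → ι) (θ : Fin n → Bool)
    (hadm : ∀ i j : Fin n, j < i → c i ≠ c j ∨ (θ i = true ∧ θ j = false))
    (Pplus Pminus : Finset (Fin n)) (Pr : Finset (Fin n × Fin n))
    -- the parts cover [1,n] …
    (hcov : ∀ i : Fin n, i ∈ Pplus ∨ i ∈ Pminus ∨ ∃ p ∈ Pr, i = p.1 ∨ i = p.2)
    -- … and are pairwise disjoint
    (hd1 : ∀ i ∈ Pplus, i ∉ Pminus)
    (hd2 : ∀ p ∈ Pr, p.1 ∉ Pplus ∧ p.1 ∉ Pminus ∧ p.2 ∉ Pplus ∧ p.2 ∉ Pminus)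
    (hd3 : ∀ p ∈ Pr, ∀ q ∈ Pr, p ≠ q →
      p.1 ≠ q.1 ∧ p.1 ≠ q.2 ∧ p.2 ≠ q.1 ∧ p.2 ≠ q.2)
    (hd4 : ∀ p ∈ Pr, p.1 ≠ p.2)
    -- signs: `𝔭₊ ⊂ ω₊`, `𝔭₋ ⊂ ω₋`, and each pair `(q,r)` has `θ q = −1`,
    -- `θ r = +1`, `q > r`
    (hplus : ∀ i ∈ Pplus, θ i = true)
    (hminus : ∀ i ∈ Pminus, θ i = false)
    (hpair : ∀ p ∈ Pr, θ p.1 = false ∧ θ p.2 = true ∧ p.2 < p.1) :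
    ¬ ∃ (m : ℕ) (g : ZMod (m + 1) → Fin n × Fin n),
        (∀ i, g i ∈ Pr) ∧ ∀ i, c (g i).2 = c (g (i + 1)).1 :=
  decomposition_graph_no_circuits_general c θ hadm Pr hpair
end

section
/- Let 𝔅 be a Banach algebra, A_1,…,A_k, B ∈ 𝔅, and s < t reals. Consider, for locally integrable 𝔅-valued functions x: ℝ × 𝔛^k → 𝔅 symmetric in each word variable, the Skorokhod integral equation x_t = 𝐞 + ∑_{j=1}^k A_j ∮^j_{s,t} x + ∫_s^t B x_u du. Then this equation has a unique solution, given explicitly by x_t(t_{α_1},…,t_{α_k}) = 𝟏{s < s_1 < ⋯ < s_n < t} · e^{(t−s_n)B} A_{i_n} e^{(s_n−s_{n−1})B} A_{i_{n−1}} ⋯ A_{i_1} e^{(s_1−s)B}, where s_1 < ⋯ < s_n is the ordered union of the time points of the k word arguments and i_l = j if s_l belongs to the j-th word. -/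
open MeasureTheory

/-- The ordered exponential product
`e^{(t−s_n)B} A_{i_n} e^{(s_n−s_{n−1})B} ⋯ A_{i_1} e^{(s_1−s)B}`, evaluated on
the list `[(s_n,i_n),…,(s_1,i_1)]` of labelled time points given in
*decreasing* time order. -/
noncomputable def orderedProd {𝔅 : Type*} [NormedRing 𝔅] [NormedAlgebra ℝ 𝔅]
    {k : ℕ} (A : Fin k → 𝔅) (B : 𝔅) (s : ℝ) : ℝ → List (ℝ × Fin k) → 𝔅
  | t, [] => NormedSpace.exp ((t - s) • B)
  | t, (r, i) :: l => NormedSpace.exp ((t - r) • B) * A i * orderedProd A B s r l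

/-- The labelled points of a finite configuration `ξ ⊂ ℝ × Fin k`, listed in
decreasing (lexicographic) order. -/
noncomputable def sortedDesc {k : ℕ} (ξ : Finset (ℝ × Fin k)) : List (ℝ × Fin k) :=
  (((ξ.image (toLex : ℝ × Fin k → Lex (ℝ × Fin k))).sort (· ≤ ·)).reverse).map
    (ofLex : Lex (ℝ × Fin k) → ℝ × Fin k)

open Classical in
/-- The explicit kernel `u_s^t(A_1,…,A_k,B)`:
`𝟏{s < s_1 < ⋯ < s_n < t} · e^{(t−s_n)B} A_{i_n} ⋯ A_{i_1} e^{(s_1−s)B}`,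
as a function of the finite labelled configuration `ξ`.  (A configuration of
`k` symmetric word variables is identified, via the map `Ξ` of the paper, with
a finite set of labelled time points; almost every configuration has pairwise
distinct times.) -/
noncomputable def uKernel {𝔅 : Type*} [NormedRing 𝔅] [NormedAlgebra ℝ 𝔅]
    {k : ℕ} (A : Fin k → 𝔅) (B : 𝔅) (s t : ℝ) (ξ : Finset (ℝ × Fin k)) : 𝔅 :=
  if ∀ p ∈ ξ, s < p.1 ∧ p.1 < t then orderedProd A B s t (sortedDesc ξ) else 0

open Classical in
/-- `x` is a (locally integrable, symmetric — symmetry being built into the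
configuration-space description) solution of the Skorokhod integral equation
`x_t = 𝐞 + ∑_j A_j ∮ʲ_{s,t} x + ∫_s^t B x_u du`, written pointwise on
configurations with pairwise distinct time points also distinct from `s`
and `t`. -/
def IsSkorokhodSolution {𝔅 : Type*} [NormedRing 𝔅] [NormedAlgebra ℝ 𝔅]
    [CompleteSpace 𝔅] {k : ℕ} (A : Fin k → 𝔅) (B : 𝔅) (s : ℝ)
    (x : ℝ → Finset (ℝ × Fin k) → 𝔅) : Prop :=
  (∀ (ξ : Finset (ℝ × Fin k)) (a b : ℝ),
      IntervalIntegrable (fun u => x u ξ) volume a b) ∧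
  ∀ t, s < t → ∀ ξ : Finset (ℝ × Fin k),
    Set.InjOn Prod.fst (ξ : Set (ℝ × Fin k)) →
    (∀ p ∈ ξ, p.1 ≠ s ∧ p.1 ≠ t) →
    x t ξ = (if ξ = (∅ : Finset (ℝ × Fin k)) then 1 else 0)
      + (∑ p ∈ ξ, if s < p.1 ∧ p.1 < t then A p.2 * x p.1 (ξ.erase p) else 0)
      + B * ∫ u in s..t, x u ξ

/-!
Existence is a direct check on each configuration `ξ`. If a time of `ξ` lies outside `]s, t[`,
every term of the equation vanishes. If `ξ = ∅`, the equation reads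
`e^{(t-s)B} = 1 + B ∫_s^t e^{(u-s)B} du`. Otherwise, with `m` the latest point of `ξ`, the kernel is
`u ↦ 𝟏{u > m} e^{(u-m)B} A_m u_s^m(ξ ∖ m)`, so only the term of `m` survives in the Skorokhod
sum and the Lebesgue integral contributes `(e^{(t-m)B} - 1) A_m u_s^m(ξ ∖ m)`.

Uniqueness is by strong induction on `ξ`: once two solutions agree on all smaller configurations,
their difference `y` satisfies `y_r = B ∫_s^r y_u du` for almost every `r > s`, so its primitive
solves `g' = B g`, `g(s) = 0`, and vanishes by uniqueness for linear ODEs.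
-/

open Set

theorem Finset.sort_insert_of_forall_lt {α : Type*} [LinearOrder α] {S : Finset α} {a : α}
    (h : ∀ b ∈ S, b < a) : (insert a S).sort (· ≤ ·) = S.sort (· ≤ ·) ++ [a] := by
  refine (Finset.sortedLT_sort _).pairwise.eq_of_mem_iff ?_ fun b => ?_
  · exact List.pairwise_append.2 ⟨(Finset.sortedLT_sort S).pairwise, List.pairwise_singleton _ _,
      fun b hb a' ha' => (List.mem_singleton.1 ha') ▸ h b ((Finset.mem_sort _).1 hb)⟩
  · simp [or_comm]

section Volterra

variable {E : Type*} [NormedAddCommGroup E] [NormedSpace ℝ E] [CompleteSpace E]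
  (L : E →L[ℝ] E) {s : ℝ}

theorem eq_zero_of_eq_intervalIntegral_clm {g : ℝ → E} (hg : Continuous g)
    (h : ∀ r, s ≤ r → g r = ∫ u in s..r, L (g u)) {t : ℝ} (ht : s ≤ t) : g t = 0 := by
  have hLg : Continuous fun u => L (g u) := L.continuous.comp hg
  have hderiv : ∀ r ∈ Ico s t, HasDerivWithinAt g (L (g r)) (Ici r) r := fun r hr =>
    (intervalIntegral.integral_hasDerivAt_right (hLg.intervalIntegrable s r)
      hLg.stronglyMeasurable.stronglyMeasurableAtFilter hLg.continuousAt).hasDerivWithinAt.congr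
      (fun r' hr' => h r' (hr.1.trans hr')) (h r hr.1)
  refine ODE_solution_unique_of_mem_Icc_right (v := fun _ => L) (s := fun _ => univ)
    (fun _ _ => L.lipschitz.lipschitzOnWith) hg.continuousOn hderiv (fun _ _ => trivial)
    continuousOn_const (fun r _ => ?_) (fun _ _ => trivial) ?_ ⟨ht, le_rfl⟩
  · simpa using hasDerivWithinAt_const r (Ici r) (0 : E)
  · simpa using h s le_rfl

theorem intervalIntegral_eq_zero_of_ae_eq_clm_intervalIntegral {y : ℝ → E}
    (hy : ∀ a b, IntervalIntegrable y volume a b)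
    (h : ∀ᵐ r, s < r → y r = L (∫ u in s..r, y u)) {t : ℝ} (ht : s ≤ t) :
    ∫ u in s..t, y u = 0 := by
  refine eq_zero_of_eq_intervalIntegral_clm L (intervalIntegral.continuous_primitive hy s)
    (fun r hr => intervalIntegral.integral_congr_ae ?_) ht
  filter_upwards [h] with u hu hmem
  rw [uIoc_of_le hr] at hmem
  exact hu hmem.1

end Volterra

section Exp

variable {𝔅 : Type*} [NormedRing 𝔅] [NormedAlgebra ℝ 𝔅] [CompleteSpace 𝔅]

theorem hasDerivAt_exp_sub_smul_mul (B D : 𝔅) (c u : ℝ) :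
    HasDerivAt (fun v : ℝ => NormedSpace.exp ((v - c) • B) * D)
      (B * (NormedSpace.exp ((u - c) • B) * D)) u := by
  simpa only [mul_assoc] using
    ((hasDerivAt_exp_smul_const' B (u - c)).comp_sub_const u c).mul_const D

theorem continuous_exp_sub_smul_mul (B D : 𝔅) (c : ℝ) :
    Continuous fun u : ℝ => NormedSpace.exp ((u - c) • B) * D :=
  continuous_iff_continuousAt.2 fun u => (hasDerivAt_exp_sub_smul_mul B D c u).continuousAt

theorem mul_intervalIntegral_exp_sub_smul_mul (B D : 𝔅) (c t : ℝ) :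
    B * ∫ u in c..t, NormedSpace.exp ((u - c) • B) * D = NormedSpace.exp ((t - c) • B) * D - D := by
  have hcont := continuous_exp_sub_smul_mul B D c
  have hpull := (ContinuousLinearMap.mul ℝ 𝔅 B).intervalIntegral_comp_comm
    (hcont.intervalIntegrable (μ := volume) c t)
  simp only [ContinuousLinearMap.mul_apply'] at hpull
  rw [← hpull, intervalIntegral.integral_eq_sub_of_hasDerivAt
    (fun u _ => hasDerivAt_exp_sub_smul_mul B D c u)
    ((continuous_const.mul hcont).intervalIntegrable c t)]
  simp

end Exp

theorem intervalIntegral_indicator_Ioi {E : Type*} [NormedAddCommGroup E] [NormedSpace ℝ E]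
    (f : ℝ → E) {s m t : ℝ} (hsm : s ≤ m) (hmt : m ≤ t) :
    ∫ u in s..t, (Ioi m).indicator f u = ∫ u in m..t, f u := by
  rw [intervalIntegral.integral_of_le (hsm.trans hmt), intervalIntegral.integral_of_le hmt,
    integral_indicator measurableSet_Ioi, Measure.restrict_restrict measurableSet_Ioi,
    inter_comm, Ioc_inter_Ioi, max_eq_right hsm]

section Kernel

variable {𝔅 : Type*} [NormedRing 𝔅] [NormedAlgebra ℝ 𝔅] {k : ℕ} (A : Fin k → 𝔅) (B : 𝔅)
  (s : ℝ)

theorem orderedProd_cons (p : ℝ × Fin k) (l : List (ℝ × Fin k)) (t : ℝ) :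
    orderedProd A B s t (p :: l)
      = NormedSpace.exp ((t - p.1) • B) * A p.2 * orderedProd A B s p.1 l :=
  rfl

theorem sortedDesc_eq_cons {ξ : Finset (ℝ × Fin k)} {m : ℝ × Fin k} (hm : m ∈ ξ)
    (hlt : ∀ p ∈ ξ, p ≠ m → p.1 < m.1) : sortedDesc ξ = m :: sortedDesc (ξ.erase m) := by
  have hlex : ∀ b ∈ (ξ.erase m).image toLex, b < toLex m := by
    simp only [Finset.mem_image, Finset.mem_erase]
    rintro _ ⟨p, ⟨hpm, hp⟩, rfl⟩
    exact Prod.Lex.toLex_lt_toLex.mpr (Or.inl (hlt p hp hpm))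
  unfold sortedDesc
  rw [← Finset.insert_erase hm, Finset.image_insert, Finset.sort_insert_of_forall_lt hlex,
    Finset.erase_insert (Finset.notMem_erase m ξ)]
  simp

theorem uKernel_empty (t : ℝ) : uKernel A B s t ∅ = NormedSpace.exp ((t - s) • B) := by
  simp [uKernel, sortedDesc, orderedProd]

theorem uKernel_eq_zero_of_mem {t : ℝ} {ξ : Finset (ℝ × Fin k)} {q : ℝ × Fin k} (hq : q ∈ ξ)
    (hqt : q.1 ∉ Ioo s t) : uKernel A B s t ξ = 0 :=
  if_neg fun h => hqt (h q hq)

theorem uKernel_eq_indicator {ξ : Finset (ℝ × Fin k)} {m : ℝ × Fin k} (hm : m ∈ ξ)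
    (hlt : ∀ p ∈ ξ, p ≠ m → p.1 < m.1) (hs : ∀ p ∈ ξ, s < p.1) :
    (fun u => uKernel A B s u ξ) = (Ioi m.1).indicator
      fun u => NormedSpace.exp ((u - m.1) • B) * (A m.2 * uKernel A B s m.1 (ξ.erase m)) := by
  funext u
  by_cases hu : m.1 < u
  · have hlast : ∀ p ∈ ξ, s < p.1 ∧ p.1 < u := fun p hp =>
      ⟨hs p hp, if hpm : p = m then hpm ▸ hu else (hlt p hp hpm).trans hu⟩
    have hrest : ∀ p ∈ ξ.erase m, s < p.1 ∧ p.1 < m.1 := fun p hp =>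
      ⟨hs p (Finset.mem_of_mem_erase hp),
        hlt p (Finset.mem_of_mem_erase hp) (Finset.ne_of_mem_erase hp)⟩
    rw [indicator_of_mem (show u ∈ Ioi m.1 from hu), uKernel, if_pos hlast, uKernel, if_pos hrest,
      sortedDesc_eq_cons hm hlt, orderedProd_cons, mul_assoc]
  · rw [indicator_of_notMem (show u ∉ Ioi m.1 from hu),
      uKernel_eq_zero_of_mem A B s hm fun h => hu h.2]

theorem continuous_orderedProd [CompleteSpace 𝔅] (l : List (ℝ × Fin k)) :
    Continuous fun t => orderedProd A B s t l := by
  cases l with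
  | nil => simpa [orderedProd] using continuous_exp_sub_smul_mul B 1 s
  | cons p l => exact (continuous_exp_sub_smul_mul B (A p.2) p.1).mul continuous_const

theorem uKernel_intervalIntegrable [CompleteSpace 𝔅] (ξ : Finset (ℝ × Fin k)) (a b : ℝ) :
    IntervalIntegrable (fun u => uKernel A B s u ξ) volume a b := by
  have hupper : IsUpperSet {u : ℝ | ∀ p ∈ ξ, s < p.1 ∧ p.1 < u} :=
    fun _ _ hle hu p hp => ⟨(hu p hp).1, (hu p hp).2.trans_le hle⟩
  have hind : (fun u => uKernel A B s u ξ)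
      = {u | ∀ p ∈ ξ, s < p.1 ∧ p.1 < u}.indicator fun u => orderedProd A B s u (sortedDesc ξ) := by
    funext u
    simp only [uKernel, indicator, mem_ofPred_eq]
  rw [hind, intervalIntegrable_iff]
  exact (continuous_orderedProd A B s _).integrableOn_uIoc.indicator
    hupper.ordConnected.measurableSet

end Kernel

section Equation

variable {𝔅 : Type*} [NormedRing 𝔅] [NormedAlgebra ℝ 𝔅] {k : ℕ} (A : Fin k → 𝔅) (B : 𝔅)
  (s : ℝ)

open Classical in
noncomputable def skorokhodRHS (x : ℝ → Finset (ℝ × Fin k) → 𝔅) (t : ℝ)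
    (ξ : Finset (ℝ × Fin k)) : 𝔅 :=
  (if ξ = (∅ : Finset (ℝ × Fin k)) then 1 else 0)
    + (∑ p ∈ ξ, if s < p.1 ∧ p.1 < t then A p.2 * x p.1 (ξ.erase p) else 0)
    + B * ∫ u in s..t, x u ξ

theorem uKernel_eq_skorokhodRHS_of_notMem_Ioo {t : ℝ} (hst : s ≤ t) {ξ : Finset (ℝ × Fin k)}
    {q : ℝ × Fin k} (hq : q ∈ ξ) (hqt : q.1 ∉ Ioo s t) :
    uKernel A B s t ξ = skorokhodRHS A B s (fun u η => uKernel A B s u η) t ξ := by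
  have hsum : ∀ p ∈ ξ,
      (if s < p.1 ∧ p.1 < t then A p.2 * uKernel A B s p.1 (ξ.erase p) else 0) = 0 := by
    intro p hp
    split_ifs with hpt
    · have hqp : q ∈ ξ.erase p := Finset.mem_erase.2 ⟨fun h => hqt (h ▸ hpt), hq⟩
      rw [uKernel_eq_zero_of_mem A B s hqp fun h => hqt ⟨h.1, h.2.trans hpt.2⟩, mul_zero]
    · rfl
  have hint : ∀ u ∈ uIcc s t, uKernel A B s u ξ = 0 := fun u hu =>
    uKernel_eq_zero_of_mem A B s hq fun h => hqt ⟨h.1, h.2.trans_le (uIcc_of_le hst ▸ hu).2⟩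
  rw [skorokhodRHS, if_neg (Finset.ne_empty_of_mem hq), uKernel_eq_zero_of_mem A B s hq hqt,
    Finset.sum_eq_zero hsum, intervalIntegral.integral_congr hint]
  simp

theorem uKernel_empty_eq_skorokhodRHS [CompleteSpace 𝔅] (t : ℝ) :
    uKernel A B s t ∅ = skorokhodRHS A B s (fun u η => uKernel A B s u η) t ∅ := by
  have h := mul_intervalIntegral_exp_sub_smul_mul B 1 s t
  simp only [mul_one] at h
  simp only [skorokhodRHS, uKernel_empty, Finset.sum_empty, h, ↓reduceIte, add_zero]
  exact (add_sub_cancel (1 : 𝔅) _).symm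

theorem uKernel_eq_skorokhodRHS_of_latest [CompleteSpace 𝔅] {t : ℝ} {ξ : Finset (ℝ × Fin k)}
    {m : ℝ × Fin k} (hm : m ∈ ξ) (hlt : ∀ p ∈ ξ, p ≠ m → p.1 < m.1)
    (hall : ∀ p ∈ ξ, p.1 ∈ Ioo s t) :
    uKernel A B s t ξ = skorokhodRHS A B s (fun u η => uKernel A B s u η) t ξ := by
  have hker := uKernel_eq_indicator A B s hm hlt fun p hp => (hall p hp).1
  have hsum : (∑ p ∈ ξ, if s < p.1 ∧ p.1 < t then A p.2 * uKernel A B s p.1 (ξ.erase p) else 0)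
      = A m.2 * uKernel A B s m.1 (ξ.erase m) := by
    refine (Finset.sum_eq_single_of_mem m hm fun p hp hpm => ?_).trans (if_pos (hall m hm))
    split_ifs with hpt
    · have hmp : m ∈ ξ.erase p := Finset.mem_erase.2 ⟨Ne.symm hpm, hm⟩
      rw [uKernel_eq_zero_of_mem A B s hmp fun h => (hlt p hp hpm).not_gt h.2, mul_zero]
    · rfl
  rw [congrFun hker t, indicator_of_mem (show t ∈ Ioi m.1 from (hall m hm).2), skorokhodRHS,
    if_neg (Finset.ne_empty_of_mem hm), hsum, hker,
    intervalIntegral_indicator_Ioi _ (hall m hm).1.le (hall m hm).2.le,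
    mul_intervalIntegral_exp_sub_smul_mul]
  abel

theorem isSkorokhodSolution_uKernel [CompleteSpace 𝔅] :
    IsSkorokhodSolution A B s fun t ξ => uKernel A B s t ξ := by
  refine ⟨uKernel_intervalIntegrable A B s, fun t ht ξ hinj _ => ?_⟩
  change uKernel A B s t ξ = skorokhodRHS A B s (fun u η => uKernel A B s u η) t ξ
  by_cases hall : ∀ p ∈ ξ, p.1 ∈ Ioo s t
  · rcases ξ.eq_empty_or_nonempty with rfl | hne
    · exact uKernel_empty_eq_skorokhodRHS A B s t
    · obtain ⟨m, hm, hmax⟩ := ξ.exists_max_image Prod.fst hne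
      exact uKernel_eq_skorokhodRHS_of_latest A B s hm
        (fun p hp hpm => (hmax p hp).lt_of_ne fun h => hpm (hinj hp hm h)) hall
  · obtain ⟨q, hq, hqt⟩ := not_forall₂.1 hall
    exact uKernel_eq_skorokhodRHS_of_notMem_Ioo A B s ht.le hq hqt

end Equation

theorem IsSkorokhodSolution.unique {𝔅 : Type*} [NormedRing 𝔅] [NormedAlgebra ℝ 𝔅]
    [CompleteSpace 𝔅] {k : ℕ} {A : Fin k → 𝔅} {B : 𝔅} {s : ℝ} {x x' : ℝ → Finset (ℝ × Fin k) → 𝔅}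
    (hx : IsSkorokhodSolution A B s x) (hx' : IsSkorokhodSolution A B s x')
    {ξ : Finset (ℝ × Fin k)} (hinj : Set.InjOn Prod.fst (ξ : Set (ℝ × Fin k))) {t : ℝ}
    (ht : s < t) (hdis : ∀ p ∈ ξ, p.1 ≠ s ∧ p.1 ≠ t) : x t ξ = x' t ξ := by
  induction ξ using Finset.strongInduction generalizing t with
  | H ξ ih =>
  have hrec : ∀ r, s < r → (∀ p ∈ ξ, p.1 ≠ r) →
      x r ξ - x' r ξ = B * ∫ u in s..r, (x u ξ - x' u ξ) := by
    intro r hr hr'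
    have hd : ∀ p ∈ ξ, p.1 ≠ s ∧ p.1 ≠ r := fun p hp => ⟨(hdis p hp).1, hr' p hp⟩
    have hsum : (∑ p ∈ ξ, if s < p.1 ∧ p.1 < r then A p.2 * x p.1 (ξ.erase p) else 0)
        = ∑ p ∈ ξ, if s < p.1 ∧ p.1 < r then A p.2 * x' p.1 (ξ.erase p) else 0 := by
      refine Finset.sum_congr rfl fun p hp => ?_
      split_ifs with hpr
      · rw [ih (ξ.erase p) (Finset.erase_ssubset hp) (hinj.mono (Finset.erase_subset p ξ)) hpr.1
          fun q hq => ⟨(hdis q (Finset.mem_of_mem_erase hq)).1,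
            fun h => Finset.ne_of_mem_erase hq (hinj (Finset.mem_of_mem_erase hq) hp h)⟩]
      · rfl
    rw [hx.2 r hr ξ hinj hd, hx'.2 r hr ξ hinj hd, hsum,
      intervalIntegral.integral_sub (hx.1 ξ s r) (hx'.1 ξ s r), mul_sub]
    abel
  have hint : ∫ u in s..t, (x u ξ - x' u ξ) = 0 := by
    refine intervalIntegral_eq_zero_of_ae_eq_clm_intervalIntegral (ContinuousLinearMap.mul ℝ 𝔅 B)
      (fun a b => (hx.1 ξ a b).sub (hx'.1 ξ a b)) ?_ ht.le
    filter_upwards [(ξ.image Prod.fst).countable_toSet.ae_notMem volume] with r hr hsr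
    exact hrec r hsr fun p hp h => hr (h ▸ Finset.mem_image_of_mem _ hp)
  rw [← sub_eq_zero, hrec t ht fun p hp => (hdis p hp).2, hint, mul_zero]

/-- Theorem 2.2.1: the Skorokhod integral equation
`x_t = 𝐞 + ∑_{j=1}^k A_j ∮ʲ_{s,t} x + ∫_s^t B x_u du` has the explicit kernel
`u_s^t(A_1,…,A_k,B)` as a solution, and this solution is unique (almost
everywhere, i.e. on configurations with pairwise distinct time points distinct
from `s` and `t`). -/
theorem skorokhod_equation_existence_uniqueness
    {𝔅 : Type*} [NormedRing 𝔅] [NormedAlgebra ℝ 𝔅] [CompleteSpace 𝔅]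
    {k : ℕ} (A : Fin k → 𝔅) (B : 𝔅) (s : ℝ) :
    IsSkorokhodSolution A B s (fun t ξ => uKernel A B s t ξ) ∧
    ∀ x : ℝ → Finset (ℝ × Fin k) → 𝔅, IsSkorokhodSolution A B s x →
      ∀ t, s < t → ∀ ξ : Finset (ℝ × Fin k),
        Set.InjOn Prod.fst (ξ : Set (ℝ × Fin k)) →
        (∀ p ∈ ξ, p.1 ≠ s ∧ p.1 ≠ t) →
        x t ξ = uKernel A B s t ξ :=
  ⟨isSkorokhodSolution_uKernel A B s, fun _ hx _ ht _ hinj hdis =>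
    hx.unique (isSkorokhodSolution_uKernel A B s) hinj ht hdis⟩
end

section
/- Let x: (t, t_{α_1},…,t_{α_k}) ↦ x_t(t_{α_1},…,t_{α_k}) ∈ 𝔅 be of class C¹. Then the Schwartz (distributional) derivative in t of x is the measure-valued expression (∂x_t)(dt) = (∂^c x)_t dt + ∑_{j=1}^k ∮^j(ε(dt))(D^j x), where D^j x = R^j_+ x − R^j_− x; i.e., for every Schwartz test function φ and continuous compactly supported symmetric g, −∫ dt_{α_1}⋯dt_{α_k} g ∫ dt φ'(t) x_t = ∫ dt_{α_1}⋯dt_{α_k} g [∫ dt φ(t)(∂^c x)_t + ∑_j (∮^j(φ) D^j x)]. -/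
open MeasureTheory Filter

/-- The list of labelled time points determined by positions `v` and labels
`lab`. -/
def labelledList {k m : ℕ} (lab : Fin m → Fin k) (v : Fin m → ℝ) :
    List (ℝ × Fin k) :=
  List.ofFn fun i => (v i, lab i)

section Aux
open Set

lemma eraseIdx_ofFn {β : Type*} : ∀ (n : ℕ) (f : Fin (n+1) → β) (c : Fin (n+1)),
    (List.ofFn f).eraseIdx (c : ℕ) = List.ofFn (f ∘ c.succAbove)
  | 0, f, c => by
      have hc : c = 0 := Fin.fin_one_eq_zero c
      subst hc
      simp [List.ofFn_succ]
  | n+1, f, c => by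
      induction c using Fin.cases with
      | zero => simp [List.ofFn_succ, Fin.succAbove_zero, Function.comp]
      | succ c' =>
          rw [List.ofFn_succ, Fin.val_succ, List.eraseIdx_cons_succ,
            eraseIdx_ofFn n (fun i => f i.succ) c']
          rw [show (f ∘ (c'.succ).succAbove) = fun i : Fin (n+1) => f (c'.succ.succAbove i) from rfl,
            List.ofFn_succ]
          congr 1
          · congr 1
            funext i
            simp [Function.comp, Fin.succ_succAbove_succ]

lemma perm_getElem_cons_eraseIdx {β : Type*} :
    ∀ (l : List β) (i : ℕ) (h : i < l.length), l.Perm (l[i] :: l.eraseIdx i)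
  | a :: l, 0, _ => by simp
  | a :: l, i+1, h => by
      have h' : i < l.length := by simpa using h
      have := perm_getElem_cons_eraseIdx l i h'
      simpa using ((this.cons a).trans (List.Perm.swap _ _ _))

variable {𝔅 : Type*} [NormedAddCommGroup 𝔅] [NormedSpace ℝ 𝔅] [CompleteSpace 𝔅]

omit [CompleteSpace 𝔅] in
lemma intervalIntegrable_smul_cont {f : ℝ → 𝔅} {φ : ℝ → ℝ} {a b : ℝ}
    (hf : IntervalIntegrable f volume a b) (hφ : Continuous φ) :
    IntervalIntegrable (fun t => φ t • f t) volume a b := by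
  rw [intervalIntegrable_iff] at hf ⊢
  obtain ⟨C, hC⟩ := (isCompact_uIcc (a := a) (b := b)).exists_bound_of_continuousOn
    hφ.continuousOn
  apply MeasureTheory.Integrable.mono' (hf.norm.const_mul C)
  · exact hφ.aestronglyMeasurable.smul hf.aestronglyMeasurable
  · refine (MeasureTheory.ae_restrict_iff' measurableSet_uIoc).2 (.of_forall fun t ht => ?_)
    rw [norm_smul]
    exact mul_le_mul_of_nonneg_right (hC t (Set.uIoc_subset_uIcc ht)) (norm_nonneg _)

lemma key_empty (φ φ' : ℝ → ℝ) (hφ : ∀ t, HasDerivAt φ (φ' t) t) (hφc : Continuous φ')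
    (f f' : ℝ → 𝔅) (a b : ℝ) (hab : a < b)
    (hfc : ContinuousOn f (Set.Ioo a b))
    (hfd : ∀ t ∈ Set.Ioo a b, HasDerivAt f (f' t) t)
    (hfi : IntervalIntegrable f' volume a b)
    (A B : 𝔅) (hA : Tendsto f (nhdsWithin a (Set.Ioi a)) (nhds A))
    (hB : Tendsto f (nhdsWithin b (Set.Iio b)) (nhds B)) :
    IntervalIntegrable f volume a b ∧
    ∫ t in a..b, φ' t • f t = φ b • B - φ a • A - ∫ t in a..b, φ t • f' t := by
  have hφcont : Continuous φ := by
    have : ∀ t, DifferentiableAt ℝ φ t := fun t => (hφ t).differentiableAt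
    exact Differentiable.continuous this
  set F : ℝ → 𝔅 := fun t => if t ∈ Set.Ioo a b then f t else if t ≤ a then A else B with hF
  have hFa : F a = A := by simp [hF]
  have hFb : F b = B := by simp [hF, hab.not_gt, not_le.2 hab]
  have hFf : ∀ t ∈ Set.Ioo a b, F t = f t := fun t ht => if_pos ht
  have hFev : ∀ t ∈ Set.Ioo a b, F =ᶠ[nhds t] f := by
    intro t ht
    filter_upwards [isOpen_Ioo.mem_nhds ht] with u hu using hFf u hu
  have hFcont : ContinuousOn F (Set.Icc a b) := by
    intro t ht
    obtain ⟨hta, htb⟩ := ht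
    rcases eq_or_lt_of_le hta with heq | hta'
    · -- t = a
      rw [← heq]
      have key : Tendsto F (nhdsWithin a (Set.Ioc a b)) (nhds A) := by
        have h1 : Tendsto f (nhdsWithin a (Set.Ioc a b)) (nhds A) :=
          hA.mono_left (nhdsWithin_mono _ Set.Ioc_subset_Ioi_self)
        apply h1.congr'
        filter_upwards [self_mem_nhdsWithin,
          mem_nhdsWithin_of_mem_nhds (Iio_mem_nhds hab)] with u hu1 hu2
        exact (hFf u ⟨hu1.1, hu2⟩).symm
      have h2 : ContinuousWithinAt F (Set.Ioc a b) a := by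
        unfold ContinuousWithinAt
        rw [hFa]; exact key
      refine (continuousWithinAt_insert_self.2 h2).mono fun u hu => ?_
      rcases eq_or_lt_of_le hu.1 with h | h
      · exact Set.mem_insert_iff.2 (Or.inl h.symm)
      · exact Set.mem_insert_iff.2 (Or.inr ⟨h, hu.2⟩)
    · rcases eq_or_lt_of_le htb with heq | htb'
      · -- t = b
        rw [heq]
        have key : Tendsto F (nhdsWithin b (Set.Ico a b)) (nhds B) := by
          have h1 : Tendsto f (nhdsWithin b (Set.Ico a b)) (nhds B) :=
            hB.mono_left (nhdsWithin_mono _ Set.Ico_subset_Iio_self)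
          apply h1.congr'
          filter_upwards [self_mem_nhdsWithin,
            mem_nhdsWithin_of_mem_nhds (Ioi_mem_nhds hab)] with u hu1 hu2
          exact (hFf u ⟨hu2, hu1.2⟩).symm
        have h2 : ContinuousWithinAt F (Set.Ico a b) b := by
          unfold ContinuousWithinAt
          rw [hFb]; exact key
        refine (continuousWithinAt_insert_self.2 h2).mono fun u hu => ?_
        rcases eq_or_lt_of_le hu.2 with h | h
        · exact Set.mem_insert_iff.2 (Or.inl h)
        · exact Set.mem_insert_iff.2 (Or.inr ⟨hu.1, h⟩)
      · exact ((hfc.continuousAt (isOpen_Ioo.mem_nhds ⟨hta', htb'⟩)).congr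
          ((hFev t ⟨hta', htb'⟩).symm)).continuousWithinAt
  -- interval integrability of F and f
  have hae : ∀ᵐ t ∂(volume : Measure ℝ), t ∈ Set.uIoc a b → F t = f t := by
    have hb0 : ∀ᵐ t ∂(volume : Measure ℝ), t ≠ b := by
      simp only [MeasureTheory.ae_iff, ne_eq, not_not]
      have : {t : ℝ | t = b} = {b} := by ext u; simp
      rw [this]; exact Real.volume_singleton
    filter_upwards [hb0] with t htb ht
    rw [Set.uIoc_of_le hab.le] at ht
    exact hFf t ⟨ht.1, lt_of_le_of_ne ht.2 htb⟩
  have hFint : IntervalIntegrable F volume a b :=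
    (hFcont.mono (by rw [Set.uIcc_of_le hab.le])).intervalIntegrable
  have hfint : IntervalIntegrable f volume a b := by
    rw [intervalIntegrable_iff] at hFint ⊢
    exact hFint.congr ((MeasureTheory.ae_restrict_iff' measurableSet_uIoc).2 hae)
  refine ⟨hfint, ?_⟩
  -- derivative of G = φ • F
  have hGd : ∀ t ∈ Set.Ioo a b,
      HasDerivAt (fun u => φ u • F u) (φ' t • F t + φ t • f' t) t := by
    intro t ht
    have hFd : HasDerivAt F (f' t) t :=
      (hfd t ht).congr_of_eventuallyEq (hFev t ht)
    have := (hφ t).smul hFd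
    convert this using 1
    · rfl
    · rw [add_comm]
  have h1 : IntervalIntegrable (fun t => φ' t • F t) volume a b :=
    ((hφc.continuousOn.smul (hFcont.mono (by rw [Set.uIcc_of_le hab.le])))).intervalIntegrable
  have h2 : IntervalIntegrable (fun t => φ t • f' t) volume a b :=
    intervalIntegrable_smul_cont hfi hφcont
  have hFTC : ∫ t in a..b, (φ' t • F t + φ t • f' t) = φ b • B - φ a • A := by
    rw [intervalIntegral.integral_eq_sub_of_hasDerivAt_of_le hab.le
      ((hφcont.continuousOn).smul hFcont) hGd (h1.add h2)]
    show φ b • F b - φ a • F a = _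
    rw [hFa, hFb]
  rw [intervalIntegral.integral_add h1 h2] at hFTC
  have hcongr : ∫ t in a..b, φ' t • F t = ∫ t in a..b, φ' t • f t := by
    apply intervalIntegral.integral_congr_ae
    filter_upwards [hae] with t ht1 ht2
    rw [ht1 ht2]
  rw [hcongr] at hFTC
  exact eq_sub_of_add_eq hFTC

lemma key_interval (φ φ' : ℝ → ℝ) (hφ : ∀ t, HasDerivAt φ (φ' t) t) (hφc : Continuous φ') :
    ∀ (N : ℕ) (S : Finset ℝ), S.card ≤ N → ∀ (f f' : ℝ → 𝔅) (jp jm : ℝ → 𝔅) (a b : ℝ),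
      a < b → (↑S ⊆ Set.Ioo a b) → ContinuousOn f (Set.Ioo a b \ ↑S) →
      (∀ t ∈ Set.Ioo a b \ (↑S : Set ℝ), HasDerivAt f (f' t) t) →
      IntervalIntegrable f' volume a b →
      ∀ (A B : 𝔅), Tendsto f (nhdsWithin a (Set.Ioi a)) (nhds A) →
      Tendsto f (nhdsWithin b (Set.Iio b)) (nhds B) →
      (∀ s ∈ S, Tendsto f (nhdsWithin s (Set.Ioi s)) (nhds (jp s))) →
      (∀ s ∈ S, Tendsto f (nhdsWithin s (Set.Iio s)) (nhds (jm s))) →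
      IntervalIntegrable f volume a b ∧
      ∫ t in a..b, φ' t • f t =
        φ b • B - φ a • A - (∫ t in a..b, φ t • f' t) + ∑ s ∈ S, φ s • (jm s - jp s) := by
  intro N
  induction N with
  | zero =>
      intro S hcard f f' jp jm a b hab hS hfc hfd hfi A B hA hB hjp hjm
      have hSempty : S = ∅ := Finset.card_eq_zero.1 (Nat.le_zero.1 hcard)
      subst hSempty
      simp only [Finset.sum_empty, add_zero]
      simp only [Finset.coe_empty, Set.diff_empty] at hfc hfd
      exact key_empty φ φ' hφ hφc f f' a b hab hfc hfd hfi A B hA hB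
  | succ N ih =>
      intro S hcard f f' jp jm a b hab hS hfc hfd hfi A B hA hB hjp hjm
      rcases S.eq_empty_or_nonempty with rfl | ⟨s, hs⟩
      · simp only [Finset.sum_empty, add_zero]
        simp only [Finset.coe_empty, Set.diff_empty] at hfc hfd
        exact key_empty φ φ' hφ hφc f f' a b hab hfc hfd hfi A B hA hB
      · have hsab : s ∈ Set.Ioo a b := hS hs
        set S₁ : Finset ℝ := S.filter (fun u => u < s) with hS₁def
        set S₂ : Finset ℝ := S.filter (fun u => s < u) with hS₂def
        have hcard₁ : S₁.card ≤ N := by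
          have hsub : S₁ ⊆ S.erase s := by
            intro u hu
            rw [Finset.mem_erase]
            exact ⟨ne_of_lt (Finset.mem_filter.1 hu).2, (Finset.mem_filter.1 hu).1⟩
          calc S₁.card ≤ (S.erase s).card := Finset.card_le_card hsub
            _ = S.card - 1 := Finset.card_erase_of_mem hs
            _ ≤ N := by omega
        have hcard₂ : S₂.card ≤ N := by
          have hsub : S₂ ⊆ S.erase s := by
            intro u hu
            rw [Finset.mem_erase]
            exact ⟨ne_of_gt (Finset.mem_filter.1 hu).2, (Finset.mem_filter.1 hu).1⟩
          calc S₂.card ≤ (S.erase s).card := Finset.card_le_card hsub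
            _ = S.card - 1 := Finset.card_erase_of_mem hs
            _ ≤ N := by omega
        -- left interval (a, s)
        have hsub₁ : Set.Ioo a s \ (↑S₁ : Set ℝ) ⊆ Set.Ioo a b \ (↑S : Set ℝ) := by
          intro t ⟨ht1, ht2⟩
          refine ⟨⟨ht1.1, ht1.2.trans hsab.2⟩, fun htS => ht2 ?_⟩
          simp only [hS₁def, Finset.coe_filter, Set.mem_setOf_eq]
          exact ⟨by exact_mod_cast htS, ht1.2⟩
        have hsub₂ : Set.Ioo s b \ (↑S₂ : Set ℝ) ⊆ Set.Ioo a b \ (↑S : Set ℝ) := by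
          intro t ⟨ht1, ht2⟩
          refine ⟨⟨hsab.1.trans ht1.1, ht1.2⟩, fun htS => ht2 ?_⟩
          simp only [hS₂def, Finset.coe_filter, Set.mem_setOf_eq]
          exact ⟨by exact_mod_cast htS, ht1.1⟩
        have h₁ := ih S₁ hcard₁ f f' jp jm a s hsab.1
          (by intro u hu
              simp only [hS₁def, Finset.coe_filter, Set.mem_setOf_eq] at hu
              exact ⟨(hS hu.1).1, hu.2⟩)
          (hfc.mono hsub₁) (fun t ht => hfd t (hsub₁ ht))
          (hfi.mono_set (by
            rw [Set.uIcc_of_le hsab.1.le, Set.uIcc_of_le hab.le]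
            exact Set.Icc_subset_Icc le_rfl hsab.2.le))
          A (jm s) hA (hjm s hs)
          (fun u hu => hjp u (Finset.mem_filter.1 hu).1)
          (fun u hu => hjm u (Finset.mem_filter.1 hu).1)
        have h₂ := ih S₂ hcard₂ f f' jp jm s b hsab.2
          (by intro u hu
              simp only [hS₂def, Finset.coe_filter, Set.mem_setOf_eq] at hu
              exact ⟨hu.2, (hS hu.1).2⟩)
          (hfc.mono hsub₂) (fun t ht => hfd t (hsub₂ ht))
          (hfi.mono_set (by
            rw [Set.uIcc_of_le hsab.2.le, Set.uIcc_of_le hab.le]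
            exact Set.Icc_subset_Icc hsab.1.le le_rfl))
          (jp s) B (hjp s hs) hB
          (fun u hu => hjp u (Finset.mem_filter.1 hu).1)
          (fun u hu => hjm u (Finset.mem_filter.1 hu).1)
        obtain ⟨hint₁, heq₁⟩ := h₁
        obtain ⟨hint₂, heq₂⟩ := h₂
        have hint : IntervalIntegrable f volume a b := hint₁.trans hint₂
        refine ⟨hint, ?_⟩
        -- split the integrals at s
        have hii₁ : IntervalIntegrable (fun t => φ' t • f t) volume a s :=
          intervalIntegrable_smul_cont hint₁ hφc
        have hii₂ : IntervalIntegrable (fun t => φ' t • f t) volume s b :=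
          intervalIntegrable_smul_cont hint₂ hφc
        have hφcont : Continuous φ := Differentiable.continuous fun t => (hφ t).differentiableAt
        have hjj₁ : IntervalIntegrable (fun t => φ t • f' t) volume a s :=
          intervalIntegrable_smul_cont (hfi.mono_set (by
            rw [Set.uIcc_of_le hsab.1.le, Set.uIcc_of_le hab.le]
            exact Set.Icc_subset_Icc le_rfl hsab.2.le)) hφcont
        have hjj₂ : IntervalIntegrable (fun t => φ t • f' t) volume s b :=
          intervalIntegrable_smul_cont (hfi.mono_set (by
            rw [Set.uIcc_of_le hsab.2.le, Set.uIcc_of_le hab.le]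
            exact Set.Icc_subset_Icc hsab.1.le le_rfl)) hφcont
        rw [← intervalIntegral.integral_add_adjacent_intervals hii₁ hii₂,
          ← intervalIntegral.integral_add_adjacent_intervals hjj₁ hjj₂,
          heq₁, heq₂]
        -- sum decomposition
        have hsum : ∑ u ∈ S, φ u • (jm u - jp u)
            = (∑ u ∈ S₁, φ u • (jm u - jp u)) + (φ s • (jm s - jp s)
              + ∑ u ∈ S₂, φ u • (jm u - jp u)) := by
          rw [← Finset.sum_filter_add_sum_filter_not S (fun u => u < s)]
          congr 1
          have : S.filter (fun u => ¬ u < s) = insert s S₂ := by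
            ext u
            simp only [Finset.mem_filter, Finset.mem_insert, hS₂def, not_lt]
            constructor
            · rintro ⟨huS, hle⟩
              rcases eq_or_lt_of_le hle with h | h
              · exact Or.inl h.symm
              · exact Or.inr ⟨huS, h⟩
            · rintro (rfl | ⟨huS, h⟩)
              · exact ⟨hs, le_rfl⟩
              · exact ⟨huS, h.le⟩
          rw [this, Finset.sum_insert (by
            simp only [hS₂def, Finset.mem_filter]
            exact fun h => lt_irrefl s h.2)]
        rw [hsum]
        have hsmul : φ s • (jm s) - φ s • (jp s) = φ s • (jm s - jp s) := (smul_sub _ _ _).symm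
        rw [← hsmul]
        abel

lemma oneDim {m : ℕ} (v : Fin m → ℝ) (hv : Function.Injective v)
    (f f' : ℝ → 𝔅) (jp jm : Fin m → 𝔅) (φ : ℝ → ℝ)
    (hφ : ContDiff ℝ (⊤ : ℕ∞) φ) (hφs : HasCompactSupport φ)
    (hfc : ContinuousOn f {t | ∀ c, v c ≠ t})
    (hfd : ∀ t, (∀ c, v c ≠ t) → HasDerivAt f (f' t) t)
    (hfi : ∀ a b : ℝ, IntervalIntegrable f' volume a b)
    (hjp : ∀ c, Tendsto f (nhdsWithin (v c) (Set.Ioi (v c))) (nhds (jp c)))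
    (hjm : ∀ c, Tendsto f (nhdsWithin (v c) (Set.Iio (v c))) (nhds (jm c))) :
    ∫ t, deriv φ t • f t = -(∫ t, φ t • f' t) + ∑ c, φ (v c) • (jm c - jp c) := by
  classical
  have hφd : ∀ t, HasDerivAt φ (deriv φ t) t :=
    fun t => ((hφ.differentiable (by simp)) t).hasDerivAt
  have hφc' : Continuous (deriv φ) := hφ.continuous_deriv (by simp)
  have hφcont : Continuous φ := hφ.continuous
  -- the jump set
  set S : Finset ℝ := Finset.image v Finset.univ with hSdef
  have hScoe : (↑S : Set ℝ) = Set.range v := by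
    simp [hSdef, Finset.coe_image]
  have hO : IsOpen {t : ℝ | ∀ c, v c ≠ t} := by
    have : {t : ℝ | ∀ c, v c ≠ t} = (Set.range v)ᶜ := by
      ext u; simp [Set.mem_range, not_exists, eq_comm]
    rw [this]
    exact (Set.finite_range v).isClosed.isOpen_compl
  -- choice of R
  obtain ⟨r, hr⟩ := hφs.isBounded.subset_closedBall 0
  obtain ⟨M, hM⟩ : ∃ M : ℝ, ∀ c : Fin m, |v c| ≤ M :=
    ⟨∑ c, |v c|, fun c => Finset.single_le_sum (f := fun c => |v c|)
      (fun i _ => abs_nonneg _) (Finset.mem_univ c)⟩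
  set R : ℝ := max (max r M) 0 + 1 with hRdef
  have hRpos : 0 < R := by
    have : (0:ℝ) ≤ max (max r M) 0 := le_max_right _ _
    linarith
  have hsupp : tsupport φ ⊆ Set.Ioo (-R) R := by
    intro t ht
    have : |t| ≤ r := by
      have := hr ht
      rwa [Metric.mem_closedBall, Real.dist_eq, sub_zero] at this
    have hrR : r ≤ R - 1 := by
      have := le_max_left r M
      have := le_max_left (max r M) 0
      simp only [hRdef]; linarith
    constructor
    · nlinarith [abs_nonneg t, neg_abs_le t]
    · nlinarith [le_abs_self t]
  have hvR : ∀ c, v c ∈ Set.Ioo (-R) R := by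
    intro c
    have h1 : |v c| ≤ R - 1 := by
      have := hM c
      have h2 := le_max_right r M
      have h3 := le_max_left (max r M) 0
      simp only [hRdef]; linarith
    constructor
    · nlinarith [neg_abs_le (v c)]
    · nlinarith [le_abs_self (v c)]
  -- jump value functions
  set jpf : ℝ → 𝔅 := fun s => if h : ∃ c, v c = s then jp h.choose else 0 with hjpfdef
  set jmf : ℝ → 𝔅 := fun s => if h : ∃ c, v c = s then jm h.choose else 0 with hjmfdef
  have hjpf : ∀ c : Fin m, jpf (v c) = jp c := by
    intro c
    have h : ∃ c', v c' = v c := ⟨c, rfl⟩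
    simp only [hjpfdef, dif_pos h]
    congr 1
    exact hv h.choose_spec
  have hjmf : ∀ c : Fin m, jmf (v c) = jm c := by
    intro c
    have h : ∃ c', v c' = v c := ⟨c, rfl⟩
    simp only [hjmfdef, dif_pos h]
    congr 1
    exact hv h.choose_spec
  -- boundary values
  have hmemR : ∀ c, v c ≠ R := fun c => (hvR c).2.ne
  have hmemR' : ∀ c, v c ≠ -R := fun c => (hvR c).1.ne'
  have hcontA : ContinuousAt f (-R) := hfc.continuousAt (hO.mem_nhds hmemR')
  have hcontB : ContinuousAt f R := hfc.continuousAt (hO.mem_nhds hmemR)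
  -- apply key_interval
  obtain ⟨_, heq⟩ := key_interval φ (deriv φ) hφd hφc' S.card S le_rfl f f' jpf jmf
    (-R) R (by linarith)
    (by rw [hScoe]; rintro t ⟨c, rfl⟩; exact hvR c)
    (hfc.mono (by
      rw [hScoe]
      rintro t ⟨_, ht⟩ c hc
      exact ht ⟨c, hc⟩))
    (fun t ht => hfd t (fun c hc => ht.2 (by rw [hScoe]; exact ⟨c, hc⟩)))
    (hfi _ _) (f (-R)) (f R)
    (hcontA.continuousWithinAt.tendsto)
    (hcontB.continuousWithinAt.tendsto)
    (by
      intro s hs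
      obtain ⟨c, _, rfl⟩ := Finset.mem_image.1 hs
      rw [hjpf c]
      exact hjp c)
    (by
      intro s hs
      obtain ⟨c, _, rfl⟩ := Finset.mem_image.1 hs
      rw [hjmf c]
      exact hjm c)
  -- boundary terms vanish
  have hφR : φ R = 0 :=
    image_eq_zero_of_notMem_tsupport (fun h => (lt_irrefl R (hsupp h).2))
  have hφR' : φ (-R) = 0 :=
    image_eq_zero_of_notMem_tsupport (fun h => (lt_irrefl (-R) (hsupp h).1))
  rw [hφR, hφR', zero_smul, zero_smul, sub_zero, zero_sub] at heq
  -- convert interval integrals to integrals over ℝ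
  have hIoc : ∀ (h : ℝ → 𝔅), (∀ t, t ∉ tsupport φ → h t = 0) →
      ∫ t in (-R)..R, h t = ∫ t, h t := by
    intro h hh
    rw [intervalIntegral.integral_of_le (by linarith)]
    apply MeasureTheory.setIntegral_eq_integral_of_forall_compl_eq_zero
    intro t ht
    apply hh
    intro hts
    exact ht (Set.Ioo_subset_Ioc_self (hsupp hts))
  have e1 : ∫ t in (-R)..R, deriv φ t • f t = ∫ t, deriv φ t • f t := by
    apply hIoc
    intro t ht
    rw [Function.notMem_support.1 (fun hs => ht (support_deriv_subset hs)), zero_smul]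
  have e2 : ∫ t in (-R)..R, φ t • f' t = ∫ t, φ t • f' t := by
    apply hIoc
    intro t ht
    rw [image_eq_zero_of_notMem_tsupport ht, zero_smul]
  rw [e1, e2] at heq
  rw [heq]
  congr 1
  rw [hSdef, Finset.sum_image (fun c _ c' _ h => hv h)]
  apply Finset.sum_congr rfl
  intro c _
  rw [hjpf c, hjmf c]

lemma ae_injective_pi (m : ℕ) : ∀ᵐ v : Fin m → ℝ, Function.Injective v := by
  rw [MeasureTheory.ae_iff]
  have hsub : {v : Fin m → ℝ | ¬ Function.Injective v}
      ⊆ ⋃ (i : Fin m) (j : Fin m) (_ : i ≠ j), {v : Fin m → ℝ | v i = v j} := by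
    intro v hv
    simp only [Function.Injective, not_forall] at hv
    obtain ⟨i, j, hij, hne⟩ := hv
    exact Set.mem_iUnion.2 ⟨i, Set.mem_iUnion.2 ⟨j, Set.mem_iUnion.2 ⟨hne, hij⟩⟩⟩
  apply MeasureTheory.measure_mono_null hsub
  refine MeasureTheory.measure_iUnion_null fun i =>
    MeasureTheory.measure_iUnion_null fun j =>
    MeasureTheory.measure_iUnion_null fun hij => ?_
  set L : (Fin m → ℝ) →ₗ[ℝ] ℝ := (LinearMap.proj i : (Fin m → ℝ) →ₗ[ℝ] ℝ) - (LinearMap.proj j : (Fin m → ℝ) →ₗ[ℝ] ℝ) with hL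
  have hset : {v : Fin m → ℝ | v i = v j} = (LinearMap.ker L : Set (Fin m → ℝ)) := by
    ext v
    simp [hL, LinearMap.mem_ker, sub_eq_zero]
  rw [hset]
  apply MeasureTheory.Measure.addHaar_submodule
  intro htop
  have hL0 : L = 0 := LinearMap.ker_eq_top.1 htop
  have : L (Pi.single i 1) = 1 := by
    simp [hL, Pi.single_eq_same, Pi.single_eq_of_ne (Ne.symm hij)]
  rw [hL0] at this
  simp at this

lemma ae_slice_integrable {E : Type*} [NormedAddCommGroup E] {m : ℕ}
    {F : ℝ × (Fin m → ℝ) → E} (h : LocallyIntegrable F volume) :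
    ∀ᵐ v : Fin m → ℝ, ∀ a b : ℝ,
      IntegrableOn (fun t => F (t, v)) (Set.Icc a b) volume := by
  have key : ∀ n : ℕ, ∀ᵐ v : Fin m → ℝ,
      v ∈ Metric.closedBall (0 : Fin m → ℝ) n →
        IntegrableOn (fun t => F (t, v)) (Set.Icc (-(n:ℝ)) n) volume := by
    intro n
    have hK : IsCompact ((Set.Icc (-(n:ℝ)) n) ×ˢ Metric.closedBall (0 : Fin m → ℝ) n) :=
      isCompact_Icc.prod (isCompact_closedBall _ _)
    have hint := h.integrableOn_isCompact hK
    have hint' : Integrable F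
        ((volume.restrict (Set.Icc (-(n:ℝ)) n)).prod
          (volume.restrict (Metric.closedBall (0 : Fin m → ℝ) n))) := by
      rw [Measure.prod_restrict]; exact hint
    exact MeasureTheory.ae_imp_of_ae_restrict hint'.prod_left_ae
  filter_upwards [MeasureTheory.ae_all_iff.2 key] with v hvn a b
  obtain ⟨n, hn⟩ := exists_nat_ge (max ‖v‖ (max |a| |b|))
  have h1 : v ∈ Metric.closedBall (0 : Fin m → ℝ) n := by
    rw [Metric.mem_closedBall, dist_zero_right]
    exact le_trans (le_max_left _ _) hn
  apply (hvn n h1).mono_set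
  have ha : |a| ≤ n := le_trans (le_trans (le_max_left _ _) (le_max_right _ _)) hn
  have hb : |b| ≤ n := le_trans (le_trans (le_max_right _ _) (le_max_right _ _)) hn
  apply Set.Icc_subset_Icc
  · linarith [neg_abs_le a]
  · linarith [le_abs_self b]


lemma eraseIdx_labelledList {k n : ℕ} (lab : Fin (n+1) → Fin k) (v : Fin (n+1) → ℝ)
    (c : Fin (n+1)) :
    (labelledList lab v).eraseIdx (c : ℕ)
      = labelledList (lab ∘ c.succAbove) (v ∘ c.succAbove) := by
  show (List.ofFn fun i => (v i, lab i)).eraseIdx (c : ℕ) = _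
  rw [eraseIdx_ofFn n _ c]
  rfl

lemma mem_eraseIdx_labelledList {k m : ℕ} (lab : Fin m → Fin k) (v : Fin m → ℝ)
    (hv : Function.Injective v) (c : Fin m) :
    ∀ q ∈ (labelledList lab v).eraseIdx (c : ℕ), q.1 ≠ v c := by
  have hm : m ≠ 0 := fun h => (h ▸ c).elim0
  obtain ⟨n, rfl⟩ : ∃ n, m = n + 1 := ⟨m - 1, by omega⟩
  intro q hq
  rw [eraseIdx_labelledList, labelledList, List.mem_ofFn] at hq
  obtain ⟨j, hj⟩ := hq
  rw [← hj]
  exact fun h => Fin.succAbove_ne c j (hv h)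

lemma perm_labelledList {k m : ℕ} (lab : Fin m → Fin k) (v : Fin m → ℝ) (c : Fin m) :
    ((v c, lab c) :: (labelledList lab v).eraseIdx (c : ℕ)).Perm (labelledList lab v) := by
  have h : (c : ℕ) < (labelledList lab v).length := by simp [labelledList]
  have hperm := perm_getElem_cons_eraseIdx (labelledList lab v) c h
  have hg : (labelledList lab v)[(c : ℕ)] = (v c, lab c) := by
    simp [labelledList, List.getElem_ofFn]
  rw [hg] at hperm
  exact hperm.symm

end Aux

/-- Proposition 2.3.2: the Schwartz derivative of a function of class `C¹`.
Here `x : ℝ × 𝔛ᵏ → 𝔅` is described symmetrically through lists of labelled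
time points; `xc = ∂ᶜx` is its pointwise time derivative off the diagonals,
and `Rp j`/`Rm j` are the right/left insertions `Rʲ₊ x`/`Rʲ₋ x`.  The class
`C⁰`/`C¹` requirements (local integrability, continuity on the set of
pairwise distinct points, existence of the derivative and of the one-sided
insertion limits) are the hypotheses.  Conclusion: for every Schwartz test
function `φ` and continuous compactly supported symmetric `g`,
`−∫ g ∫ φ' x = ∫ g [∫ φ ∂ᶜx + ∑_j ∮ʲ(φ)(Dʲx)]` with `Dʲx = Rʲ₊x − Rʲ₋x`. -/
theorem schwartz_derivative_of_classC1
    {𝔅 : Type*} [NormedAddCommGroup 𝔅] [NormedSpace ℝ 𝔅] [CompleteSpace 𝔅]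
    {k : ℕ}
    (x xc : ℝ → List (ℝ × Fin k) → 𝔅)
    (Rp Rm : Fin k → ℝ → List (ℝ × Fin k) → 𝔅)
    -- symmetry of `x` (it is a function of the words, not of their orderings)
    (hsymx : ∀ (t : ℝ) (l l' : List (ℝ × Fin k)), l.Perm l' → x t l = x t l')
    -- `x` is of class `C⁰`: locally integrable and continuous off the diagonals
    (hx_int : ∀ (m : ℕ) (lab : Fin m → Fin k),
      LocallyIntegrable
        (fun p : ℝ × (Fin m → ℝ) => x p.1 (labelledList lab p.2)) volume)
    (hx_cont : ∀ (m : ℕ) (lab : Fin m → Fin k),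
      ContinuousOn (fun p : ℝ × (Fin m → ℝ) => x p.1 (labelledList lab p.2))
        {p | Function.Injective p.2 ∧ ∀ i, p.2 i ≠ p.1})
    -- `xc = ∂ᶜx` off the diagonals, and it is of class `C⁰`
    (hderiv : ∀ (l : List (ℝ × Fin k)) (t : ℝ), (∀ q ∈ l, q.1 ≠ t) →
      HasDerivAt (fun u => x u l) (xc t l) t)
    (hxc_int : ∀ (m : ℕ) (lab : Fin m → Fin k),
      LocallyIntegrable
        (fun p : ℝ × (Fin m → ℝ) => xc p.1 (labelledList lab p.2)) volume)
    (hxc_cont : ∀ (m : ℕ) (lab : Fin m → Fin k),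
      ContinuousOn (fun p : ℝ × (Fin m → ℝ) => xc p.1 (labelledList lab p.2))
        {p | Function.Injective p.2 ∧ ∀ i, p.2 i ≠ p.1})
    -- one-sided insertion limits `Rʲ₊x`, `Rʲ₋x`, of class `C⁰`
    (hRp_lim : ∀ (j : Fin k) (t : ℝ) (l : List (ℝ × Fin k)),
      (∀ q ∈ l, q.1 ≠ t) →
      Tendsto (fun u => x u ((t, j) :: l)) (nhdsWithin t (Set.Ioi t))
        (nhds (Rp j t l)))
    (hRm_lim : ∀ (j : Fin k) (t : ℝ) (l : List (ℝ × Fin k)),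
      (∀ q ∈ l, q.1 ≠ t) →
      Tendsto (fun u => x u ((t, j) :: l)) (nhdsWithin t (Set.Iio t))
        (nhds (Rm j t l)))
    (hRp_int : ∀ (j : Fin k) (m : ℕ) (lab : Fin m → Fin k),
      LocallyIntegrable
        (fun p : ℝ × (Fin m → ℝ) => Rp j p.1 (labelledList lab p.2)) volume)
    (hRm_int : ∀ (j : Fin k) (m : ℕ) (lab : Fin m → Fin k),
      LocallyIntegrable
        (fun p : ℝ × (Fin m → ℝ) => Rm j p.1 (labelledList lab p.2)) volume)
    (hRp_cont : ∀ (j : Fin k) (m : ℕ) (lab : Fin m → Fin k),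
      ContinuousOn (fun p : ℝ × (Fin m → ℝ) => Rp j p.1 (labelledList lab p.2))
        {p | Function.Injective p.2 ∧ ∀ i, p.2 i ≠ p.1})
    (hRm_cont : ∀ (j : Fin k) (m : ℕ) (lab : Fin m → Fin k),
      ContinuousOn (fun p : ℝ × (Fin m → ℝ) => Rm j p.1 (labelledList lab p.2))
        {p | Function.Injective p.2 ∧ ∀ i, p.2 i ≠ p.1}) :
    ∀ (m : ℕ) (lab : Fin m → Fin k) (φ : ℝ → ℝ) (g : (Fin m → ℝ) → ℝ),
      ContDiff ℝ (⊤ : ℕ∞) φ → HasCompactSupport φ →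
      Continuous g → HasCompactSupport g →
      (∀ σ : Equiv.Perm (Fin m), (∀ i, lab (σ i) = lab i) →
        ∀ v, g (v ∘ σ) = g v) →
      -(∫ v : Fin m → ℝ, ∫ t : ℝ,
          (g v * deriv φ t) • x t (labelledList lab v))
        = (∫ v : Fin m → ℝ, ∫ t : ℝ,
            (g v * φ t) • xc t (labelledList lab v))
          + ∫ v : Fin m → ℝ, g v • ∑ c : Fin m,
              φ (v c) •
                (Rp (lab c) (v c) ((labelledList lab v).eraseIdx c)
                  - Rm (lab c) (v c) ((labelledList lab v).eraseIdx c)) := by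
  intro m lab φ g hφ hφs hg hgs _hsymg
  classical
  have hφcont : Continuous φ := hφ.continuous
  -- Part 1: integrability of the first right-hand side term
  have hgφcont : Continuous fun p : ℝ × (Fin m → ℝ) => g p.2 * φ p.1 :=
    (hg.comp continuous_snd).mul (hφcont.comp continuous_fst)
  have hgφsupp : HasCompactSupport fun p : ℝ × (Fin m → ℝ) => g p.2 * φ p.1 := by
    apply HasCompactSupport.intro
      (hφs.prod hgs : IsCompact ((tsupport φ) ×ˢ (tsupport g)))
    intro p hp
    rcases not_and_or.1 (fun hmem => hp (Set.mem_prod.2 hmem)) with h | h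
    · rw [image_eq_zero_of_notMem_tsupport h, mul_zero]
    · rw [image_eq_zero_of_notMem_tsupport h, zero_mul]
  have hH : Integrable
      (fun p : ℝ × (Fin m → ℝ) => (g p.2 * φ p.1) • xc p.1 (labelledList lab p.2))
      volume :=
    (hxc_int m lab).integrable_smul_left_of_hasCompactSupport hgφcont hgφsupp
  have hA : Integrable
      (fun v : Fin m → ℝ => ∫ t : ℝ, (g v * φ t) • xc t (labelledList lab v))
      volume := by
    have h2 : Integrable
        (fun p : ℝ × (Fin m → ℝ) => (g p.2 * φ p.1) • xc p.1 (labelledList lab p.2))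
        ((volume : Measure ℝ).prod (volume : Measure (Fin m → ℝ))) := hH
    exact h2.integral_prod_right
  -- Part 2: integrability of the jump term
  have hB : Integrable
      (fun v : Fin m → ℝ => g v • ∑ c : Fin m,
        φ (v c) • (Rp (lab c) (v c) ((labelledList lab v).eraseIdx c)
          - Rm (lab c) (v c) ((labelledList lab v).eraseIdx c))) volume := by
    have hBeq : (fun v : Fin m → ℝ => g v • ∑ c : Fin m,
        φ (v c) • (Rp (lab c) (v c) ((labelledList lab v).eraseIdx c)
          - Rm (lab c) (v c) ((labelledList lab v).eraseIdx c)))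
        = fun v : Fin m → ℝ => ∑ c : Fin m,
            (g v * φ (v c)) • (Rp (lab c) (v c) ((labelledList lab v).eraseIdx c)
              - Rm (lab c) (v c) ((labelledList lab v).eraseIdx c)) := by
      funext v
      rw [Finset.smul_sum]
      exact Finset.sum_congr rfl fun c _ => (smul_smul _ _ _)
    rw [hBeq]
    apply MeasureTheory.integrable_finset_sum
    intro c _
    have hm : m ≠ 0 := fun h => (h ▸ c).elim0
    obtain ⟨n, rfl⟩ : ∃ n, m = n + 1 := ⟨m - 1, by omega⟩
    have herase : ∀ v : Fin (n+1) → ℝ, (labelledList lab v).eraseIdx (c : ℕ)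
        = labelledList (lab ∘ c.succAbove) (v ∘ c.succAbove) :=
      fun v => eraseIdx_labelledList lab v c
    simp only [herase]
    set lab' : Fin n → Fin k := lab ∘ c.succAbove with hlab'
    set W : ℝ × (Fin n → ℝ) → 𝔅 := fun p =>
      (g (c.insertNth p.1 p.2) * φ p.1) •
        (Rp (lab c) p.1 (labelledList lab' p.2) - Rm (lab c) p.1 (labelledList lab' p.2))
      with hW
    have hWsc_cont : Continuous fun p : ℝ × (Fin n → ℝ) => g (c.insertNth p.1 p.2) * φ p.1 :=
      ((hg.comp (Continuous.finInsertNth c continuous_fst continuous_snd)).mul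
        (hφcont.comp continuous_fst))
    have hWsc_supp : HasCompactSupport
        fun p : ℝ × (Fin n → ℝ) => g (c.insertNth p.1 p.2) * φ p.1 := by
      have hKcomp : IsCompact ((fun v : Fin (n+1) → ℝ =>
          ((v c, fun j => v (c.succAbove j)) : ℝ × (Fin n → ℝ))) '' tsupport g) :=
        hgs.image ((continuous_apply c).prodMk
          (continuous_pi fun j => continuous_apply (c.succAbove j)))
      apply HasCompactSupport.intro hKcomp
      intro p hp
      have hg0 : g (c.insertNth p.1 p.2) = 0 := by
        by_contra hne
        apply hp
        refine ⟨c.insertNth p.1 p.2, subset_tsupport _ hne, ?_⟩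
        refine Prod.ext ?_ ?_
        · simp [Fin.insertNth_apply_same]
        · funext j
          simp [Fin.insertNth_apply_succAbove]
      rw [hg0, zero_mul]
    have hWvec : LocallyIntegrable (fun p : ℝ × (Fin n → ℝ) =>
        Rp (lab c) p.1 (labelledList lab' p.2) - Rm (lab c) p.1 (labelledList lab' p.2))
        volume :=
      (hRp_int (lab c) n lab').sub (hRm_int (lab c) n lab')
    have hWint : Integrable W volume :=
      hWvec.integrable_smul_left_of_hasCompactSupport hWsc_cont hWsc_supp
    have hmp := MeasureTheory.volume_preserving_piFinSuccAbove
      (fun _ : Fin (n+1) => ℝ) c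
    have hcomp : Integrable
        (W ∘ (MeasurableEquiv.piFinSuccAbove (fun _ : Fin (n+1) => ℝ) c)) volume :=
      (hmp.integrable_comp_emb
        (MeasurableEquiv.piFinSuccAbove (fun _ : Fin (n+1) => ℝ) c).measurableEmbedding).2
        hWint
    have hfuneq : (W ∘ (MeasurableEquiv.piFinSuccAbove (fun _ : Fin (n+1) => ℝ) c))
        = fun v : Fin (n+1) → ℝ => (g v * φ (v c)) •
            (Rp (lab c) (v c) (labelledList lab' (v ∘ c.succAbove))
              - Rm (lab c) (v c) (labelledList lab' (v ∘ c.succAbove))) := by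
      funext v
      have he : (MeasurableEquiv.piFinSuccAbove (fun _ : Fin (n+1) => ℝ) c) v
          = ((v c, fun j => v (c.succAbove j)) : ℝ × (Fin n → ℝ)) := rfl
      simp only [Function.comp_apply, he, hW]
      congr 2
      exact congrArg g (Fin.insertNth_self_removeNth c v)
    rw [hfuneq] at hcomp
    exact hcomp
  -- Part 3: the pointwise (in v) identity, almost everywhere
  have key : ∀ᵐ v : Fin m → ℝ,
      -(∫ t : ℝ, (g v * deriv φ t) • x t (labelledList lab v))
        = (∫ t : ℝ, (g v * φ t) • xc t (labelledList lab v))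
          + g v • ∑ c : Fin m,
              φ (v c) • (Rp (lab c) (v c) ((labelledList lab v).eraseIdx c)
                - Rm (lab c) (v c) ((labelledList lab v).eraseIdx c)) := by
    filter_upwards [ae_injective_pi m, ae_slice_integrable (hxc_int m lab)] with v hv hsl
    set f : ℝ → 𝔅 := fun t => x t (labelledList lab v) with hf
    set f' : ℝ → 𝔅 := fun t => xc t (labelledList lab v) with hf'
    set jp : Fin m → 𝔅 := fun c => Rp (lab c) (v c) ((labelledList lab v).eraseIdx c)
      with hjp
    set jm : Fin m → 𝔅 := fun c => Rm (lab c) (v c) ((labelledList lab v).eraseIdx c)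
      with hjm
    have hfc : ContinuousOn f {t | ∀ c, v c ≠ t} := by
      apply (hx_cont m lab).comp
        ((continuous_id.prodMk continuous_const).continuousOn)
      intro t ht
      exact ⟨hv, fun i => ht i⟩
    have hfd : ∀ t, (∀ c, v c ≠ t) → HasDerivAt f (f' t) t := by
      intro t ht
      apply hderiv (labelledList lab v) t
      intro q hq
      rw [labelledList, List.mem_ofFn] at hq
      obtain ⟨i, hi⟩ := hq
      rw [← hi]
      exact ht i
    have hfi : ∀ a b : ℝ, IntervalIntegrable f' volume a b := by
      intro a b
      rw [intervalIntegrable_iff]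
      apply (hsl (min a b) (max a b)).mono_set
      rw [Set.uIoc]
      exact Set.Ioc_subset_Icc_self
    have hjpt : ∀ c, Tendsto f (nhdsWithin (v c) (Set.Ioi (v c))) (nhds (jp c)) := by
      intro c
      have hlim := hRp_lim (lab c) (v c) ((labelledList lab v).eraseIdx c)
        (mem_eraseIdx_labelledList lab v hv c)
      have hfun : (fun u => x u ((v c, lab c) :: (labelledList lab v).eraseIdx (c : ℕ)))
          = f := funext fun u => hsymx u _ _ (perm_labelledList lab v c)
      rwa [hfun] at hlim
    have hjmt : ∀ c, Tendsto f (nhdsWithin (v c) (Set.Iio (v c))) (nhds (jm c)) := by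
      intro c
      have hlim := hRm_lim (lab c) (v c) ((labelledList lab v).eraseIdx c)
        (mem_eraseIdx_labelledList lab v hv c)
      have hfun : (fun u => x u ((v c, lab c) :: (labelledList lab v).eraseIdx (c : ℕ)))
          = f := funext fun u => hsymx u _ _ (perm_labelledList lab v c)
      rwa [hfun] at hlim
    have h1d := oneDim v hv f f' jp jm φ hφ hφs hfc hfd hfi hjpt hjmt
    have e1 : (∫ t : ℝ, (g v * deriv φ t) • x t (labelledList lab v))
        = g v • ∫ t, deriv φ t • f t := by
      rw [← MeasureTheory.integral_smul]
      congr 1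
      funext t
      rw [smul_smul]
    have e2 : (∫ t : ℝ, (g v * φ t) • xc t (labelledList lab v))
        = g v • ∫ t, φ t • f' t := by
      rw [← MeasureTheory.integral_smul]
      congr 1
      funext t
      rw [smul_smul]
    rw [e1, e2, ← smul_neg, h1d]
    rw [neg_add, neg_neg, ← smul_add]
    congr 1
    congr 1
    rw [← Finset.sum_neg_distrib]
    apply Finset.sum_congr rfl
    intro c _
    rw [← smul_neg, neg_sub]
  -- Part 4: conclusion
  calc -(∫ v : Fin m → ℝ, ∫ t : ℝ, (g v * deriv φ t) • x t (labelledList lab v))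
      = ∫ v : Fin m → ℝ, -(∫ t : ℝ, (g v * deriv φ t) • x t (labelledList lab v)) := by
        rw [MeasureTheory.integral_neg]
    _ = ∫ v : Fin m → ℝ, ((∫ t : ℝ, (g v * φ t) • xc t (labelledList lab v))
          + g v • ∑ c : Fin m,
              φ (v c) • (Rp (lab c) (v c) ((labelledList lab v).eraseIdx c)
                - Rm (lab c) (v c) ((labelledList lab v).eraseIdx c))) :=
        MeasureTheory.integral_congr_ae key
    _ = _ := MeasureTheory.integral_add hA hB
end

section
/- Unitarity conditions: let A_1, A_0, A_{−1}, B be bounded operators on a Hilbert space 𝔨 and set C_1 = B + B⁺ + A_1⁺A_1, C_3 = A_0⁺ + A_0 + A_0⁺A_0, C_7 = A_0 + A_0⁺ + A_0A_0⁺, C_2 = A_{−1}⁺ + A_1 + A_0⁺A_1, C_5 = B + B⁺ + A_{−1}A_{−1}⁺, C_6 = A_1 + A_{−1}⁺ + A_0A_{−1}⁺. Then the system C_1 = C_2 = C_3 = C_5 = C_6 = C_7 = 0 holds if and only if there exists a unitary operator Υ with A_0 = Υ − 1, A_1 = −Υ A_{−1}⁺, and B + B⁺ = −A_1⁺A_1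 = −A_{−1}A_{−1}⁺. -/
/-!
Put `Υ = A₀ + 1`. Then `C₃ = Υ⁺Υ - 1` and `C₇ = ΥΥ⁺ - 1`, so `C₃ = C₇ = 0` says exactly that `Υ`
is unitary, while `C₆ = A₁ + ΥA₋₁⁺` and `C₂ = A₋₁⁺ + Υ⁺A₁`. Hence `C₆ = 0` is `A₁ = -ΥA₋₁⁺`, and
given that, `C₂ = (1 - Υ⁺Υ)A₋₁⁺` vanishes by unitarity. `C₁` and `C₅` are the conditions on `B`.
The argument is pure algebra and works in any star ring.
-/

open ContinuousLinearMap

section Ring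

variable {R : Type*} [Ring R]

theorem add_add_mul_eq_add_add_one_mul (x y a : R) : x + y + a * y = x + (a + 1) * y := by
  noncomm_ring

variable [StarRing R]

theorem star_add_one_mul_add_one_eq_one_iff (a : R) :
    star (a + 1) * (a + 1) = 1 ↔ star a + a + star a * a = 0 := by
  rw [show star (a + 1) * (a + 1) = star a + a + star a * a + 1 by
    simp only [star_add, star_one]; noncomm_ring, add_eq_right]

theorem add_one_mul_star_add_one_eq_one_iff (a : R) :
    (a + 1) * star (a + 1) = 1 ↔ a + star a + a * star a = 0 := by
  rw [show (a + 1) * star (a + 1) = a + star a + a * star a + 1 by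
    simp only [star_add, star_one]; noncomm_ring, add_eq_right]

theorem unitarity_conditions_iff (A1 A0 Am B : R) :
    (B + star B + star A1 * A1 = 0 ∧
     star Am + A1 + star A0 * A1 = 0 ∧
     star A0 + A0 + star A0 * A0 = 0 ∧
     B + star B + Am * star Am = 0 ∧
     A1 + star Am + A0 * star Am = 0 ∧
     A0 + star A0 + A0 * star A0 = 0)
    ↔
    ∃ Υ : R,
      star Υ * Υ = 1 ∧ Υ * star Υ = 1 ∧
      A0 = Υ - 1 ∧
      A1 = -(Υ * star Am) ∧
      B + star B = -(star A1 * A1) ∧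
      B + star B = -(Am * star Am) := by
  simp only [← add_eq_zero_iff_eq_neg, add_add_mul_eq_add_add_one_mul A1,
    add_add_mul_eq_add_add_one_mul (star Am), ← star_add_one_mul_add_one_eq_one_iff,
    ← add_one_mul_star_add_one_eq_one_iff]
  constructor
  · rintro ⟨hB1, -, hΥ, hB5, hA1, hΥ'⟩
    exact ⟨A0 + 1, hΥ, hΥ', (add_sub_cancel_right A0 1).symm, hA1, hB1, hB5⟩
  · rintro ⟨Υ, hΥ, hΥ', rfl, hA1, hB1, hB5⟩
    rw [sub_add_cancel] at *
    refine ⟨hB1, ?_, hΥ, hB5, hA1, hΥ'⟩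
    rw [star_sub, star_one, sub_add_cancel, eq_neg_of_add_eq_zero_left hA1, mul_neg,
      ← mul_assoc, hΥ, one_mul, add_neg_cancel]

end Ring

/-- Unitarity conditions for the quantum stochastic evolution: with
`C₁ = B + B⁺ + A₁⁺A₁`, `C₂ = A₋₁⁺ + A₁ + A₀⁺A₁`, `C₃ = A₀⁺ + A₀ + A₀⁺A₀`,
`C₅ = B + B⁺ + A₋₁A₋₁⁺`, `C₆ = A₁ + A₋₁⁺ + A₀A₋₁⁺`,
`C₇ = A₀ + A₀⁺ + A₀A₀⁺`, the system `C₁ = C₂ = C₃ = C₅ = C₆ = C₇ = 0` holds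
iff there is a unitary `Υ` with `A₀ = Υ − 1`, `A₁ = −ΥA₋₁⁺` and
`B + B⁺ = −A₁⁺A₁ = −A₋₁A₋₁⁺`. -/
theorem unitarity_conditions
    {𝔨 : Type*} [NormedAddCommGroup 𝔨] [InnerProductSpace ℂ 𝔨] [CompleteSpace 𝔨]
    (A1 A0 Am B : 𝔨 →L[ℂ] 𝔨) :
    (B + adjoint B + adjoint A1 * A1 = 0 ∧
     adjoint Am + A1 + adjoint A0 * A1 = 0 ∧
     adjoint A0 + A0 + adjoint A0 * A0 = 0 ∧
     B + adjoint B + Am * adjoint Am = 0 ∧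
     A1 + adjoint Am + A0 * adjoint Am = 0 ∧
     A0 + adjoint A0 + A0 * adjoint A0 = 0)
    ↔
    ∃ Υ : 𝔨 →L[ℂ] 𝔨,
      adjoint Υ * Υ = 1 ∧ Υ * adjoint Υ = 1 ∧
      A0 = Υ - 1 ∧
      A1 = -(Υ * adjoint Am) ∧
      B + adjoint B = -(adjoint A1 * A1) ∧
      B + adjoint B = -(Am * adjoint Am) := by
  simpa only [star_eq_adjoint] using unitarity_conditions_iff A1 A0 Am B
end

section
/- Binomial number-operator identity: for a measurable function f: 𝔜 → 𝔨 on the word/configuration space over ℝ and k ∈ ℕ, ∫ λ_{ξ+ω} 𝟏{#ξ = k} ‖f(ξ+ω)‖² = ⟨f | binom(N,k) | f⟩, i.e. splitting the symmetrized Lebesgue integral over configurations into a k-point subconfiguration ξ and remainder ω and integrating ‖f‖² over both yields ∑_n (1/n!)·binom(n,k) ∫_{ℝ^n} ‖f(t_1,…,t_n)‖² dt_1⋯dt_n, where (Nf)(w) = (#w)f(w) is the number operator. -/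
open MeasureTheory Nat

/-! Splitting `ℝ^(k+m)` as `ℝ^k × ℝ^m` preserves Lebesgue measure, so the `m`-th term of the left
side is `‖f (k+m)‖²` integrated over `ℝ^(k+m)` with weight `1/(k! m!) = C(k+m, k)/(k+m)!`.
Reindexing `n = k + m` gives the right side, whose terms with `n < k` vanish since
`C(n, k) = 0`. -/

theorem tsum_nat_add_left_eq_tsum {M : Type*} [AddCommMonoid M] [TopologicalSpace M]
    {f : ℕ → M} {k : ℕ} (hf : ∀ n < k, f n = 0) : ∑' m, f (k + m) = ∑' n, f n := by
  refine (add_right_injective k).tsum_eq fun n hn => ⟨n - k, Nat.add_sub_cancel' ?_⟩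
  exact not_lt.1 fun hlt => hn (hf n hlt)

theorem ENNReal.inv_factorial_mul_inv_factorial (k m : ℕ) :
    (k ! : ENNReal)⁻¹ * (m ! : ENNReal)⁻¹ = ((k + m)! : ENNReal)⁻¹ * (k + m).choose k := by
  have hC : ((k + m).choose k : ENNReal) ≠ 0 := by
    exact_mod_cast (Nat.choose_pos (Nat.le_add_right k m)).ne'
  rw [← Nat.add_choose_mul_factorial_mul_factorial k m, ← Nat.choose_symm_add]
  push_cast
  rw [mul_assoc, ENNReal.mul_inv (.inl hC) (.inl (by simp)), ENNReal.mul_inv (by simp) (by simp),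
    mul_comm _ (((k + m).choose k : ℕ) : ENNReal), ← mul_assoc, ← mul_assoc,
    ENNReal.mul_inv_cancel hC (by simp), one_mul]

namespace MeasurableEquiv

variable (α : Type*) [MeasurableSpace α] (m n : ℕ)

def finAppend : (Fin m → α) × (Fin n → α) ≃ᵐ (Fin (m + n) → α) :=
  (sumPiEquivProdPi fun _ : Fin m ⊕ Fin n => α).symm.trans (piCongrLeft (fun _ => α) finSumFinEquiv)

theorem finAppend_toEquiv : (finAppend α m n).toEquiv = Fin.appendEquiv m n := by
  apply Equiv.symm_bijective.injective
  ext x i <;> rfl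

@[simp]
theorem coe_finAppend : ⇑(finAppend α m n) = fun p => Fin.append p.1 p.2 :=
  congrArg DFunLike.coe (finAppend_toEquiv α m n)

variable {α}

theorem measurePreserving_finAppend (μ : Measure α) [SigmaFinite μ] :
    MeasurePreserving (finAppend α m n)
      ((Measure.pi fun _ => μ).prod (Measure.pi fun _ => μ)) (Measure.pi fun _ => μ) :=
  (measurePreserving_piCongrLeft (fun _ => μ) finSumFinEquiv).comp
    (measurePreserving_sumPiEquivProdPi_symm fun _ => μ)

end MeasurableEquiv

theorem lintegral_finAppend {α : Type*} [MeasurableSpace α] (μ : Measure α) [SigmaFinite μ]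
    {m n : ℕ} (g : (Fin (m + n) → α) → ENNReal) :
    ∫⁻ p, g (Fin.append p.1 p.2) ∂((Measure.pi fun _ => μ).prod (Measure.pi fun _ => μ)) =
      ∫⁻ v, g v ∂(Measure.pi fun _ => μ) := by
  simpa using (MeasurableEquiv.measurePreserving_finAppend m n μ).lintegral_comp_emb
    (MeasurableEquiv.finAppend α m n).measurableEmbedding g

theorem binomial_number_operator_identity_general
    {𝔨 : Type*} [NormedAddCommGroup 𝔨]
    (f : (n : ℕ) → (Fin n → ℝ) → 𝔨)
    (k : ℕ) :
    (Nat.factorial k : ENNReal)⁻¹ *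
        ∑' m : ℕ, (Nat.factorial m : ENNReal)⁻¹ *
          ∫⁻ p : (Fin k → ℝ) × (Fin m → ℝ),
            (‖f (k + m) (Fin.append p.1 p.2)‖₊ : ENNReal) ^ 2
      = ∑' n : ℕ, (Nat.factorial n : ENNReal)⁻¹ * (n.choose k : ENNReal) *
          ∫⁻ v : Fin n → ℝ, (‖f n v‖₊ : ENNReal) ^ 2 := by
  have hvanish : ∀ n < k, (n ! : ENNReal)⁻¹ * (n.choose k : ENNReal) *
      ∫⁻ v : Fin n → ℝ, (‖f n v‖₊ : ENNReal) ^ 2 = 0 := fun n hn => by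
    simp [Nat.choose_eq_zero_of_lt hn]
  rw [← tsum_nat_add_left_eq_tsum hvanish, ← ENNReal.tsum_mul_left]
  refine tsum_congr fun m => ?_
  rw [← mul_assoc, ENNReal.inv_factorial_mul_inv_factorial]
  exact congrArg _ (lintegral_finAppend volume fun v => (‖f (k + m) v‖₊ : ENNReal) ^ 2)

/-- Binomial number-operator identity (Lemma 4.3.1): for a measurable family
`f` of symmetric `𝔨`-valued functions on the configuration space
`𝔜 = {∅} + ℝ + ℝ² + ⋯` (given by its components `f n : ℝⁿ → 𝔨`), splitting a
configuration into a `k`-point part `ξ` and a remainder `ω` and integrating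
`‖f(ξ+ω)‖²` over both (with the symmetrized Lebesgue weights `1/k!`, `1/m!`)
equals `⟨f | binom(N,k) | f⟩ = ∑ₙ (1/n!)·C(n,k)·∫_{ℝⁿ} ‖f‖²`. -/
theorem binomial_number_operator_identity
    {𝔨 : Type*} [NormedAddCommGroup 𝔨]
    (f : (n : ℕ) → (Fin n → ℝ) → 𝔨)
    (hmeas : ∀ n, Measurable fun v => ‖f n v‖)
    (hsym : ∀ (n : ℕ) (σ : Equiv.Perm (Fin n)) (v : Fin n → ℝ),
      f n (v ∘ σ) = f n v)
    (k : ℕ) :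
    (Nat.factorial k : ENNReal)⁻¹ *
        ∑' m : ℕ, (Nat.factorial m : ENNReal)⁻¹ *
          ∫⁻ p : (Fin k → ℝ) × (Fin m → ℝ),
            (‖f (k + m) (Fin.append p.1 p.2)‖₊ : ENNReal) ^ 2
      = ∑' n : ℕ, (Nat.factorial n : ENNReal)⁻¹ * (n.choose k : ENNReal) *
          ∫⁻ v : Fin n → ℝ, (‖f n v‖₊ : ENNReal) ^ 2 :=
  binomial_number_operator_identity_general f k
end

section
/- Coefficient correspondence for the Hamiltonian: let M_0, M_1, M_{−1}, G be bounded operators on a Hilbert space with M_0⁺ = M_0, M_1⁺ = M_{−1}, G⁺ = G. Define A_1 = (i − M_0/2)^{−1} M_1, A_0 = M_0 (i − M_0/2)^{−1}, A_{−1} = M_{−1}(i − M_0/2)^{−1}, B = −iG − (i/2) M_{−1}(i − M_0/2)^{−1} M_1 (noting i − M_0/2 is invertible since M_0 is self-adjoint). Then these operators satisfy the four equations C_1 = −iA_1 + M_1 + (1/2)M_0A_1 = 0, C_2 = −iA_0 + M_0 + (1/2)M_0A_0 = 0, C_3 = −iA_{−1} + M_{−1} + (1/2)M_{−1}A_0 =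 0, C_4 = −iB + G + (1/2)M_{−1}A_1 = 0; moreover Υ := 1 + A_0 = (i + M_0/2)(i − M_0/2)^{−1} is unitary, A_1 = −ΥA_{−1}⁺, and B + B⁺ = −A_1⁺A_1. -/
/-!
Put `T = i - M₀/2`. Since `M₀` is self-adjoint, `T⁺ = -(i + M₀/2)`, so `T` is normal and
`T - T⁺ = 2i`; and `T` is invertible because `i` is not in the (real) spectrum of `M₀/2`.
Then `Υ = 1 + M₀T⁻¹ = -T⁺T⁻¹` is unitary because `T` is normal, `Υ (T⁺)⁻¹ = -T⁻¹` gives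
`A₁ = -ΥA₋₁⁺`, and `(T⁺)⁻¹ - T⁻¹ = (T⁺)⁻¹ (T - T⁺) T⁻¹ = 2i (T⁺)⁻¹T⁻¹` gives
`B + B⁺ = -A₁⁺A₁`. Expanding `T`, the equations `C₁, C₂, C₃` read `M - T(T⁻¹M) = 0` or
`M - (MT⁻¹)T = 0` (using that `M₀` commutes with `T⁻¹`), and `C₄` is an identity between scalars.
-/

open Complex

theorem IsSelfAdjoint.isUnit_smul_one_sub {A : Type*} [CStarAlgebra A] {a : A}
    (ha : IsSelfAdjoint a) {z : ℂ} (hz : z.im ≠ 0) : IsUnit (z • 1 - a) := by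
  rw [← Algebra.algebraMap_eq_smul_one, ← spectrum.notMem_iff]
  exact fun h ↦ hz (ha.im_eq_zero_of_mem_spectrum h)

namespace Units

variable {R : Type*} [Ring R] [StarRing R]

theorem star_inv_sub_inv (t : Rˣ) :
    star (↑t⁻¹ : R) - ↑t⁻¹ = star ↑t⁻¹ * (↑t - star ↑t) * ↑t⁻¹ := by
  rw [mul_sub, sub_mul, ← star_mul, Units.mul_inv, star_one, one_mul,
    Units.mul_inv_cancel_right]

theorem star_mul_inv_mem_unitary (t : Rˣ) (h : Commute (star (t : R)) t) :
    star (t : R) * ↑t⁻¹ ∈ unitary R := by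
  have h_inv : Commute (star (↑t⁻¹ : R)) ↑t⁻¹ := by
    rw [← Units.coe_star_inv]
    exact (Units.coe_star t ▸ h).units_inv_left.units_inv_right
  have hstar : star (↑t⁻¹ : R) * star ↑t = 1 := by rw [← star_mul, Units.mul_inv, star_one]
  have hstar' : star (↑t : R) * star ↑t⁻¹ = 1 := by rw [← star_mul, Units.inv_mul, star_one]
  rw [Unitary.mem_iff, star_mul, star_star]
  constructor
  · calc star (↑t⁻¹ : R) * ↑t * (star ↑t * ↑t⁻¹) = star ↑t⁻¹ * (↑t * star ↑t) * ↑t⁻¹ := by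
          simp only [mul_assoc]
      _ = 1 := by rw [← h.eq, ← mul_assoc, hstar, one_mul, Units.mul_inv]
  · calc star (t : R) * ↑t⁻¹ * (star ↑t⁻¹ * ↑t) = star ↑t * (↑t⁻¹ * star ↑t⁻¹) * ↑t := by
          simp only [mul_assoc]
      _ = 1 := by rw [← h_inv.eq, ← mul_assoc, hstar', one_mul, Units.inv_mul]

end Units

section CayleyTransform

variable {R : Type*} [Ring R] [Algebra ℂ R]

theorem neg_I_smul_add_add_eq_sub_mul_left (a x y : R) :
    -(I • x) + y + (2 : ℂ)⁻¹ • (a * x) = y - (I • 1 - (2 : ℂ)⁻¹ • a) * x := by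
  rw [sub_mul, smul_mul_assoc, smul_mul_assoc, one_mul]
  abel

theorem neg_I_smul_add_add_eq_sub_mul_right (a x y : R) :
    -(I • x) + y + (2 : ℂ)⁻¹ • (x * a) = y - x * (I • 1 - (2 : ℂ)⁻¹ • a) := by
  rw [mul_sub, mul_smul_comm, mul_smul_comm, mul_one]
  abel

theorem commute_I_smul_one_sub_inv_two_smul (a : R) : Commute a (I • 1 - (2 : ℂ)⁻¹ • a) :=
  ((Commute.one_right a).smul_right I).sub_right ((Commute.refl a).smul_right _)

theorem one_add_mul_inv_eq {a : R} {t : Rˣ} (ht : (t : R) = I • 1 - (2 : ℂ)⁻¹ • a) :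
    1 + a * ↑t⁻¹ = (I • 1 + (2 : ℂ)⁻¹ • a) * ↑t⁻¹ := by
  have : I • 1 + (2 : ℂ)⁻¹ • a = ↑t + a := by rw [ht]; module
  rw [this, add_mul, Units.mul_inv]

variable [StarRing R] [StarModule ℂ R] {a : R} {t : Rˣ}

theorem IsSelfAdjoint.star_I_smul_one_sub_inv_two_smul (ha : IsSelfAdjoint a) :
    star (I • 1 - (2 : ℂ)⁻¹ • a) = -(I • 1 + (2 : ℂ)⁻¹ • a) := by
  rw [star_sub, star_smul, star_smul, star_one, ha.star_eq]
  simp only [Complex.star_def, Complex.conj_I, map_inv₀, Complex.conj_ofNat]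
  module

theorem one_add_mul_inv_eq_neg_star_mul_inv
    (ha : IsSelfAdjoint a) (ht : (t : R) = I • 1 - (2 : ℂ)⁻¹ • a) :
    1 + a * ↑t⁻¹ = -(star (t : R) * ↑t⁻¹) := by
  rw [one_add_mul_inv_eq ht, ht, ha.star_I_smul_one_sub_inv_two_smul, neg_mul, neg_neg]

theorem commute_star_units_self
    (ha : IsSelfAdjoint a) (ht : (t : R) = I • 1 - (2 : ℂ)⁻¹ • a) : Commute (star (t : R)) t := by
  have hat : Commute a t := ht ▸ commute_I_smul_one_sub_inv_two_smul a
  rw [ht, ha.star_I_smul_one_sub_inv_two_smul, ← ht]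
  exact (((Commute.one_left _).smul_left I).add_left (hat.smul_left _)).neg_left

theorem one_add_mul_inv_mem_unitary
    (ha : IsSelfAdjoint a) (ht : (t : R) = I • 1 - (2 : ℂ)⁻¹ • a) : 1 + a * ↑t⁻¹ ∈ unitary R := by
  rw [one_add_mul_inv_eq_neg_star_mul_inv ha ht]
  exact (-⟨_, t.star_mul_inv_mem_unitary (commute_star_units_self ha ht)⟩ : unitary R).prop

theorem one_add_mul_inv_mul_star_inv
    (ha : IsSelfAdjoint a) (ht : (t : R) = I • 1 - (2 : ℂ)⁻¹ • a) :
    (1 + a * ↑t⁻¹) * star ↑t⁻¹ = -↑t⁻¹ := by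
  rw [one_add_mul_inv_eq_neg_star_mul_inv ha ht, neg_mul,
    (commute_star_units_self ha ht).units_inv_right.eq, mul_assoc, ← star_mul, Units.inv_mul,
    star_one, mul_one]

theorem star_inv_sub_inv_eq_two_I_smul
    (ha : IsSelfAdjoint a) (ht : (t : R) = I • 1 - (2 : ℂ)⁻¹ • a) :
    star (↑t⁻¹ : R) - ↑t⁻¹ = (2 * I) • (star ↑t⁻¹ * ↑t⁻¹) := by
  have : (t : R) - star ↑t = (2 * I) • 1 := by
    rw [ht, ha.star_I_smul_one_sub_inv_two_smul]; module
  rw [t.star_inv_sub_inv, this, mul_smul_comm, mul_one, smul_mul_assoc]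

theorem add_star_eq_neg_star_mul_self
    (ha : IsSelfAdjoint a) (ht : (t : R) = I • 1 - (2 : ℂ)⁻¹ • a) {g : R} (hg : IsSelfAdjoint g)
    (m : R) :
    -(I • g) - ((2 : ℂ)⁻¹ * I) • (star m * ↑t⁻¹ * m)
        + star (-(I • g) - ((2 : ℂ)⁻¹ * I) • (star m * ↑t⁻¹ * m))
      = -(star (↑t⁻¹ * m) * (↑t⁻¹ * m)) := by
  have hB : -(I • g) - ((2 : ℂ)⁻¹ * I) • (star m * ↑t⁻¹ * m)
        + star (-(I • g) - ((2 : ℂ)⁻¹ * I) • (star m * ↑t⁻¹ * m))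
      = ((2 : ℂ)⁻¹ * I) • (star m * (star ↑t⁻¹ - ↑t⁻¹) * m) := by
    simp only [star_sub, star_neg, star_smul, star_mul, star_star, hg.star_eq, Complex.star_def,
      map_inv₀, Complex.conj_ofNat, Complex.conj_I, mul_sub, sub_mul, mul_assoc]
    module
  rw [hB, star_inv_sub_inv_eq_two_I_smul ha ht, mul_smul_comm, smul_mul_assoc, smul_smul,
    show (2 : ℂ)⁻¹ * I * (2 * I) = -1 by ring_nf; simp, neg_one_smul, star_mul]
  simp only [mul_assoc]

end CayleyTransform

open ContinuousLinearMap

/-- Coefficient correspondence for the Hamiltonian: for bounded operators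
`M₀, M₁, M₋₁, G` with `M₀⁺ = M₀`, `M₁⁺ = M₋₁`, `G⁺ = G`, the operator
`T = i − M₀/2` is invertible, and setting `A₁ = T⁻¹M₁`, `A₀ = M₀T⁻¹`,
`A₋₁ = M₋₁T⁻¹`, `B = −iG − (i/2)M₋₁T⁻¹M₁`, the four equations
`−iA₁ + M₁ + ½M₀A₁ = 0`, `−iA₀ + M₀ + ½M₀A₀ = 0`,
`−iA₋₁ + M₋₁ + ½M₋₁A₀ = 0`, `−iB + G + ½M₋₁A₁ = 0` hold; moreover
`Υ := 1 + A₀ = (i + M₀/2)(i − M₀/2)⁻¹` is unitary, `A₁ = −ΥA₋₁⁺` and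
`B + B⁺ = −A₁⁺A₁`. -/
theorem hamiltonian_coefficient_correspondence
    {𝔨 : Type*} [NormedAddCommGroup 𝔨] [InnerProductSpace ℂ 𝔨] [CompleteSpace 𝔨]
    (M0 M1 Mm G : 𝔨 →L[ℂ] 𝔨)
    (hM0 : IsSelfAdjoint M0) (hM1 : adjoint M1 = Mm) (hG : IsSelfAdjoint G) :
    ∃ Tinv : 𝔨 →L[ℂ] 𝔨,
      (Complex.I • (1 : 𝔨 →L[ℂ] 𝔨) - (2 : ℂ)⁻¹ • M0) * Tinv = 1 ∧
      Tinv * (Complex.I • (1 : 𝔨 →L[ℂ] 𝔨) - (2 : ℂ)⁻¹ • M0) = 1 ∧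
      (-(Complex.I • (Tinv * M1)) + M1 + (2 : ℂ)⁻¹ • (M0 * (Tinv * M1)) = 0) ∧
      (-(Complex.I • (M0 * Tinv)) + M0 + (2 : ℂ)⁻¹ • (M0 * (M0 * Tinv)) = 0) ∧
      (-(Complex.I • (Mm * Tinv)) + Mm + (2 : ℂ)⁻¹ • (Mm * (M0 * Tinv)) = 0) ∧
      (-(Complex.I •
            (-(Complex.I • G) - ((2 : ℂ)⁻¹ * Complex.I) • (Mm * Tinv * M1)))
          + G + (2 : ℂ)⁻¹ • (Mm * (Tinv * M1)) = 0) ∧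
      (1 + M0 * Tinv
        = (Complex.I • (1 : 𝔨 →L[ℂ] 𝔨) + (2 : ℂ)⁻¹ • M0) * Tinv) ∧
      (adjoint (1 + M0 * Tinv) * (1 + M0 * Tinv) = 1) ∧
      ((1 + M0 * Tinv) * adjoint (1 + M0 * Tinv) = 1) ∧
      (Tinv * M1 = -((1 + M0 * Tinv) * adjoint (Mm * Tinv))) ∧
      ((-(Complex.I • G) - ((2 : ℂ)⁻¹ * Complex.I) • (Mm * Tinv * M1))
          + adjoint (-(Complex.I • G) - ((2 : ℂ)⁻¹ * Complex.I) • (Mm * Tinv * M1))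
        = -(adjoint (Tinv * M1) * (Tinv * M1))) := by
  have hM0_half : IsSelfAdjoint ((2 : ℂ)⁻¹ • M0) := (IsSelfAdjoint.ofNat 2).inv₀.smul hM0
  obtain ⟨t, ht⟩ := hM0_half.isUnit_smul_one_sub (z := I) (by simp)
  subst hM1
  simp only [← star_eq_adjoint]
  have hcomm : Commute M0 ↑t⁻¹ := (ht ▸ commute_I_smul_one_sub_inv_two_smul M0).units_inv_right
  have hΥ := Unitary.mem_iff.1 (one_add_mul_inv_mem_unitary hM0 ht)
  refine ⟨↑t⁻¹, ht ▸ t.mul_inv, ht ▸ t.inv_mul, ?_, ?_, ?_, ?_, one_add_mul_inv_eq ht,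
    hΥ.1, hΥ.2, ?_, add_star_eq_neg_star_mul_self hM0 ht hG M1⟩
  · rw [neg_I_smul_add_add_eq_sub_mul_left, ← ht, Units.mul_inv_cancel_left, sub_self]
  · rw [neg_I_smul_add_add_eq_sub_mul_left, ← ht, hcomm.eq, Units.mul_inv_cancel_left, sub_self]
  · rw [hcomm.eq, ← mul_assoc, neg_I_smul_add_add_eq_sub_mul_right, ← ht,
      Units.inv_mul_cancel_right, sub_self]
  · rw [mul_assoc]
    match_scalars <;> ring_nf <;> simp
  · rw [star_mul, star_star, ← mul_assoc, one_add_mul_inv_mul_star_inv hM0 ht, neg_mul,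
      neg_neg]
end
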